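/- arXiv:math/0611561 — 6 statements merged into one kernel-verified Lean document; each statement's English description precedes it below -/
import Mathlib

section
/- Let 0 < S₀ ≤ S₁ be real numbers. For every measurable function S : [0,1] → ℝ satisfying S₀ ≤ S(x) ≤ S₁ for all x ∈ [0,1], the following inequality holds: (1/2)·(∫₀¹ S(x) dx)² ≤ (1 + (1/2)·log(S₁/S₀)) · ∫₀¹ (1−x)·S(x)² dx. -/
set_option maxHeartbeats 2000000

open MeasureTheory intervalIntegral

lemma intInt_bdd {f : ℝ → ℝ} {C : ℝ} (hf : Measurable f)
    (h : ∀ x ∈ Set.Icc (0:ℝ) 1, |f x| ≤ C) :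
    IntervalIntegrable f volume 0 1 := by
  rw [intervalIntegrable_iff_integrableOn_Icc_of_le (by norm_num)]
  have hC : IntegrableOn (fun _ : ℝ => C) (Set.Icc 0 1) volume :=
    (intervalIntegrable_iff_integrableOn_Icc_of_le (by norm_num)).1 intervalIntegrable_const
  refine hC.mono' hf.aestronglyMeasurable.restrict ?_
  refine (ae_restrict_iff' measurableSet_Icc).2 (Filter.Eventually.of_forall ?_)
  intro x hx
  simpa [Real.norm_eq_abs] using h x hx

lemma poly_int (k q u v : ℝ) :
    ∫ x in u..v, ((1-x)*k - q) = (k - q)*(v-u) - k*(v^2-u^2)/2 := by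
  have h : (fun x : ℝ => (1-x)*k - q) = fun x => (k - q) - k*x := by funext x; ring
  rw [h, intervalIntegral.integral_sub intervalIntegrable_const
    ((intervalIntegrable_id).const_mul k),
    intervalIntegral.integral_const, intervalIntegral.integral_const_mul, integral_id]
  simp [smul_eq_mul]
  ring

lemma master (S₀ S₁ b : ℝ) (S : ℝ → ℝ) (hS₀ : 0 < S₀) (hS₀S₁ : S₀ ≤ S₁)
    (hb : 0 < b) (hbS₁ : b ≤ S₁) (hmeas : Measurable S)
    (hbound : ∀ x ∈ Set.Icc (0:ℝ) 1, S₀ ≤ S x ∧ S x ≤ S₁) :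
    2*b*(∫ x in (0:ℝ)..1, S x)
      + ((S₀^2 - 2*b*S₀)*(max 0 (1 - b/S₀)) - S₀^2*(max 0 (1 - b/S₀))^2/2)
      - b^2*(Real.log (1 - max 0 (1 - b/S₀)) - Real.log (b/S₁))
      + (b^2/2 - 2*b^2) ≤ ∫ x in (0:ℝ)..1, (1 - x) * (S x)^2 := by
  have hS₁ : 0 < S₁ := lt_of_lt_of_le hS₀ hS₀S₁
  obtain ⟨p, hpdef⟩ : ∃ t : ℝ, t = max 0 (1 - b/S₀) := ⟨_, rfl⟩
  rw [← hpdef]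
  obtain ⟨x₂, hx₂def⟩ : ∃ t : ℝ, t = 1 - b/S₁ := ⟨_, rfl⟩
  have hbS₁' : b/S₁ ≤ 1 := (div_le_one hS₁).2 hbS₁
  have hbS₁pos : 0 < b/S₁ := div_pos hb hS₁
  have hx₂0 : 0 ≤ x₂ := by rw [hx₂def]; linarith
  have hx₂1 : x₂ < 1 := by rw [hx₂def]; linarith
  have hx₁x₂ : 1 - b/S₀ ≤ x₂ := by
    have : b/S₁ ≤ b/S₀ := div_le_div_of_nonneg_left hb.le hS₀ hS₀S₁
    rw [hx₂def]; linarith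
  have hp0 : 0 ≤ p := hpdef ▸ le_max_left _ _
  have hpx₂ : p ≤ x₂ := by rw [hpdef]; exact max_le hx₂0 hx₁x₂
  have h1x₂ : (1:ℝ) - x₂ = b/S₁ := by rw [hx₂def]; ring
  have h1p : 0 < 1 - p := by
    have : p ≤ x₂ := hpx₂
    linarith
  obtain ⟨c, hcdef⟩ : ∃ f : ℝ → ℝ,
      f = fun x => if x₂ < x then S₁ else if 1 - b/S₀ < x then b/(1-x) else S₀ := ⟨_, rfl⟩
  have hmc : Measurable c := by
    rw [hcdef]
    apply Measurable.ite (measurableSet_lt measurable_const measurable_id) measurable_const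
    apply Measurable.ite (measurableSet_lt measurable_const measurable_id)
    · exact measurable_const.div (measurable_const.sub measurable_id)
    · exact measurable_const
  have hcb : ∀ x ∈ Set.Icc (0:ℝ) 1, S₀ ≤ c x ∧ c x ≤ S₁ := by
    intro x hx
    obtain ⟨hx0, hx1⟩ := hx
    by_cases h2 : x₂ < x
    · simp [hcdef, h2]; exact hS₀S₁
    · by_cases h1 : 1 - b/S₀ < x
      · have hx2le : x ≤ x₂ := not_lt.1 h2
        have h1x : 0 < 1 - x := by
          have : b/S₁ ≤ 1 - x := by rw [← h1x₂]; linarith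
          linarith
        simp only [hcdef, h2, h1, if_false, if_true, if_neg, if_pos]
        constructor
        · rw [le_div_iff₀ h1x]
          have h3 : 1 - x < b/S₀ := by linarith
          have e : S₀*(b/S₀) = b := by field_simp
          nlinarith [mul_lt_mul_of_pos_left h3 hS₀]
        · rw [div_le_iff₀ h1x]
          have h3 : b/S₁ ≤ 1 - x := by rw [← h1x₂]; linarith
          have e : S₁*(b/S₁) = b := by field_simp
          nlinarith [mul_le_mul_of_nonneg_left h3 hS₁.le]
      · simp [hcdef, h2, h1]; exact hS₀S₁
  obtain ⟨φ, hφdef⟩ : ∃ f : ℝ → ℝ, f = fun x => (1-x)*(c x)^2 - 2*b*(c x) := ⟨_, rfl⟩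
  have hmφ : Measurable φ := by
    rw [hφdef]
    fun_prop
  -- integrability
  have hiS : IntervalIntegrable S volume 0 1 := by
    apply intInt_bdd hmeas (C := S₁)
    intro x hx
    obtain ⟨h1, h2⟩ := hbound x hx
    exact abs_le.2 ⟨by linarith, h2⟩
  have hif1 : IntervalIntegrable (fun x => (1 - x) * (S x)^2) volume 0 1 := by
    apply intInt_bdd (by fun_prop) (C := S₁^2)
    intro x hx
    obtain ⟨h1, h2⟩ := hbound x hx
    obtain ⟨hx0, hx1⟩ := hx
    rw [abs_mul]
    calc |1 - x| * |(S x)^2| ≤ 1 * S₁^2 := by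
          apply mul_le_mul
          · rw [abs_le]; constructor <;> linarith
          · rw [abs_of_nonneg (sq_nonneg _)]; nlinarith
          · exact abs_nonneg _
          · norm_num
      _ = S₁^2 := by ring
  have hiφ : IntervalIntegrable φ volume 0 1 := by
    apply intInt_bdd hmφ (C := S₁^2 + 2*b*S₁)
    intro x hx
    obtain ⟨hc1, hc2⟩ := hcb x hx
    obtain ⟨hx0, hx1⟩ := hx
    have habs : |(1-x)*(c x)^2| ≤ S₁^2 := by
      rw [abs_mul]
      calc |1 - x| * |(c x)^2| ≤ 1 * S₁^2 := by
            apply mul_le_mul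
            · rw [abs_le]; constructor <;> linarith
            · rw [abs_of_nonneg (sq_nonneg _)]; nlinarith
            · exact abs_nonneg _
            · norm_num
        _ = S₁^2 := by ring
    have habs2 : |2*b*(c x)| ≤ 2*b*S₁ := by
      rw [abs_of_nonneg (mul_nonneg (by linarith : (0:ℝ) ≤ 2*b) (by linarith : (0:ℝ) ≤ c x))]
      nlinarith
    rw [hφdef]
    calc |(1-x)*(c x)^2 - 2*b*(c x)| ≤ |(1-x)*(c x)^2| + |2*b*(c x)| := abs_sub _ _
      _ ≤ S₁^2 + 2*b*S₁ := by linarith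
  -- pointwise inequality
  have hg : ∀ x ∈ Set.Icc (0:ℝ) 1, 0 ≤ (1-x)*(S x)^2 - 2*b*(S x) - φ x := by
    intro x hx
    obtain ⟨hx0, hx1⟩ := hx
    obtain ⟨hSl, hSu⟩ := hbound x ⟨hx0, hx1⟩
    by_cases h2 : x₂ < x
    · have hcx : c x = S₁ := by simp [hcdef, h2]
      simp only [hφdef, hcx]
      have h1x' : 1 - x < b/S₁ := by rw [← h1x₂]; linarith
      have hkey : (1-x)*(S x + S₁) ≤ 2*b := by
        have e : (b/S₁)*(2*S₁) = 2*b := by field_simp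
        nlinarith [mul_le_mul h1x'.le (by linarith : S x + S₁ ≤ 2*S₁)
          (by linarith) hbS₁pos.le]
      nlinarith [mul_nonneg (by linarith : (0:ℝ) ≤ S₁ - S x)
        (by linarith : (0:ℝ) ≤ 2*b - (1-x)*(S x + S₁))]
    · by_cases h1 : 1 - b/S₀ < x
      · have hcx : c x = b/(1-x) := by simp [hcdef, h2, h1]
        have h1x : 0 < 1 - x := by
          have : b/S₁ ≤ 1 - x := by rw [← h1x₂]; linarith [not_lt.1 h2]
          linarith
        simp only [hφdef, hcx]
        have hkey : (1-x)*(S x)^2 - 2*b*(S x) - ((1-x)*(b/(1-x))^2 - 2*b*(b/(1-x)))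
            = (1-x)*(S x - b/(1-x))^2 := by field_simp; ring
        rw [hkey]
        positivity
      · have hcx : c x = S₀ := by simp [hcdef, h2, h1]
        simp only [hφdef, hcx]
        have hxle : x ≤ 1 - b/S₀ := not_lt.1 h1
        have hkey : 2*b ≤ (1-x)*(S x + S₀) := by
          have e : (b/S₀)*(2*S₀) = 2*b := by field_simp
          nlinarith [mul_le_mul (by linarith : b/S₀ ≤ 1 - x)
            (by linarith : 2*S₀ ≤ S x + S₀) (by linarith) (by linarith : (0:ℝ) ≤ 1 - x)]
        nlinarith [mul_nonneg (by linarith : (0:ℝ) ≤ S x - S₀)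
          (by linarith : (0:ℝ) ≤ (1-x)*(S x + S₀) - 2*b)]
  have h0 : 0 ≤ ∫ x in (0:ℝ)..1, ((1-x)*(S x)^2 - 2*b*(S x) - φ x) :=
    intervalIntegral.integral_nonneg (by norm_num) hg
  have hsplit : (∫ x in (0:ℝ)..1, ((1-x)*(S x)^2 - 2*b*(S x) - φ x))
      = (∫ x in (0:ℝ)..1, (1 - x) * (S x)^2) - 2*b*(∫ x in (0:ℝ)..1, S x)
        - ∫ x in (0:ℝ)..1, φ x := by
    rw [intervalIntegral.integral_sub (hif1.sub (hiS.const_mul (2*b))) hiφ,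
        intervalIntegral.integral_sub hif1 (hiS.const_mul (2*b)),
        intervalIntegral.integral_const_mul]
  have hmem : ∀ z : ℝ, 0 ≤ z → z ≤ 1 → z ∈ Set.uIcc (0:ℝ) 1 := by
    intro z h1 h2
    rw [Set.uIcc_of_le (by norm_num : (0:ℝ) ≤ 1)]
    exact ⟨h1, h2⟩
  have hint1 : IntervalIntegrable φ volume 0 p :=
    hiφ.mono_set (Set.uIcc_subset_uIcc (hmem 0 le_rfl (by norm_num)) (hmem p hp0 (by linarith)))
  have hint2 : IntervalIntegrable φ volume p x₂ :=
    hiφ.mono_set (Set.uIcc_subset_uIcc (hmem p hp0 (by linarith)) (hmem x₂ hx₂0 hx₂1.le))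
  have hint3 : IntervalIntegrable φ volume x₂ 1 :=
    hiφ.mono_set (Set.uIcc_subset_uIcc (hmem x₂ hx₂0 hx₂1.le) (hmem 1 (by norm_num) le_rfl))
  have hDsplit : (∫ x in (0:ℝ)..p, φ x) + (∫ x in p..x₂, φ x) + (∫ x in x₂..(1:ℝ), φ x)
      = ∫ x in (0:ℝ)..1, φ x := by
    rw [intervalIntegral.integral_add_adjacent_intervals hint1 hint2]
    exact intervalIntegral.integral_add_adjacent_intervals (hint1.trans hint2) hint3
  have hP1 : (∫ x in (0:ℝ)..p, φ x) = (S₀^2 - 2*b*S₀)*(p-0) - S₀^2*(p^2-0^2)/2 := by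
    rcases eq_or_lt_of_le hp0 with h|h
    · rw [← h]
      simp
    · have hx₁pos : 0 < 1 - b/S₀ := by
        by_contra hcon
        push_neg at hcon
        rw [hpdef, max_eq_left hcon] at h
        exact lt_irrefl 0 h
      have hpx₁ : p = 1 - b/S₀ := by rw [hpdef]; exact max_eq_right hx₁pos.le
      have hcg : (∫ x in (0:ℝ)..p, φ x) = ∫ x in (0:ℝ)..p, ((1-x)*S₀^2 - 2*b*S₀) := by
        apply intervalIntegral.integral_congr
        intro x hx
        rw [Set.uIcc_of_le hp0] at hx
        obtain ⟨hxa, hxb⟩ := hx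
        have hne2 : ¬ x₂ < x := not_lt.2 (le_trans hxb hpx₂)
        have hne1 : ¬ 1 - b/S₀ < x := not_lt.2 (by rw [← hpx₁]; exact hxb)
        have hcx : c x = S₀ := by simp [hcdef, hne2, hne1]
        simp [hφdef, hcx]
      rw [hcg, poly_int]
  have hP2 : (∫ x in p..x₂, φ x) = -(b^2*(Real.log (1-p) - Real.log (b/S₁))) := by
    have hcg : (∫ x in p..x₂, φ x) = ∫ x in p..x₂, -(b^2 * (1-x)⁻¹) := by
      apply intervalIntegral.integral_congr
      intro x hx
      rw [Set.uIcc_of_le hpx₂] at hx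
      obtain ⟨hxa, hxb⟩ := hx
      have h1x : 0 < 1 - x := by
        have : b/S₁ ≤ 1 - x := by rw [← h1x₂]; linarith
        linarith
      have hne2 : ¬ x₂ < x := not_lt.2 hxb
      by_cases h1 : 1 - b/S₀ < x
      · have hcx : c x = b/(1-x) := by simp [hcdef, hne2, h1]
        simp only [hφdef, hcx]
        field_simp
        ring
      · have hxeq : x = 1 - b/S₀ := by
          have h' := hxa
          rw [hpdef] at h'
          exact le_antisymm (not_lt.1 h1) (le_trans (le_max_right _ _) h')
        have hcx : c x = S₀ := by simp [hcdef, hne2, h1]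
        simp only [hφdef, hcx]
        rw [hxeq]
        have he : (1:ℝ) - (1 - b/S₀) = b/S₀ := by ring
        rw [he]
        field_simp
        ring
    rw [hcg, intervalIntegral.integral_neg, intervalIntegral.integral_const_mul]
    have hcs : (∫ x in p..x₂, (1-x)⁻¹) = ∫ y in (1-x₂)..(1-p), y⁻¹ := by
      simpa using intervalIntegral.integral_comp_sub_left (a := p) (b := x₂) (fun y => y⁻¹) 1
    rw [hcs, integral_inv_of_pos (by linarith) h1p,
      Real.log_div (by positivity) (by linarith [h1x₂] : (1:ℝ) - x₂ ≠ 0)]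
    rw [h1x₂]
  have hP3 : (∫ x in x₂..(1:ℝ), φ x) = (S₁^2 - 2*b*S₁)*(1-x₂) - S₁^2*(1^2-x₂^2)/2 := by
    have hcg : (∫ x in x₂..(1:ℝ), φ x) = ∫ x in x₂..(1:ℝ), ((1-x)*S₁^2 - 2*b*S₁) := by
      apply intervalIntegral.integral_congr
      intro x hx
      rw [Set.uIcc_of_le hx₂1.le] at hx
      obtain ⟨hxa, hxb⟩ := hx
      by_cases h2 : x₂ < x
      · have hcx : c x = S₁ := by simp [hcdef, h2]
        simp [hφdef, hcx]
      · have hxeq : x = x₂ := le_antisymm (not_lt.1 h2) hxa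
        by_cases h1 : 1 - b/S₀ < x
        · have hcx : c x = b/(1-x) := by simp [hcdef, h2, h1]
          simp only [hφdef, hcx]
          rw [hxeq, h1x₂]
          have he : b/(b/S₁) = S₁ := by
            rw [div_div_eq_mul_div, mul_comm, mul_div_assoc, div_self hb.ne', mul_one]
          rw [he]
        · have hx₁eq : 1 - b/S₀ = x₂ := le_antisymm hx₁x₂ (hxeq ▸ not_lt.1 h1)
          have hSS : S₀ = S₁ := by
            have hdd : b/S₀ = b/S₁ := by
              rw [hx₂def] at hx₁eq
              linarith
            have h' := (div_eq_div_iff hS₀.ne' hS₁.ne').1 hdd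
            exact (mul_left_cancel₀ hb.ne' h').symm
          have hcx : c x = S₀ := by simp [hcdef, h2, h1]
          simp only [hφdef, hcx, hSS]
    rw [hcg, poly_int]
  have hval3 : (S₁^2 - 2*b*S₁)*(1-x₂) - S₁^2*((1:ℝ)^2-x₂^2)/2 = b^2/2 - 2*b^2 := by
    rw [hx₂def]
    field_simp
    ring
  have hD : (∫ x in (0:ℝ)..1, φ x)
      = ((S₀^2 - 2*b*S₀)*p - S₀^2*p^2/2)
        - b^2*(Real.log (1-p) - Real.log (b/S₁)) + (b^2/2 - 2*b^2) := by
    rw [← hDsplit, hP1, hP2, hP3, hval3]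
    ring
  rw [hsplit, hD] at h0
  linarith

theorem max_cooling_inequality (S₀ S₁ : ℝ) (hS₀ : 0 < S₀) (hS₀S₁ : S₀ ≤ S₁)
    (S : ℝ → ℝ) (hmeas : Measurable S)
    (hbound : ∀ x ∈ Set.Icc (0:ℝ) 1, S₀ ≤ S x ∧ S x ≤ S₁) :
    (1/2) * (∫ x in (0:ℝ)..1, S x)^2 ≤
      (1 + (1/2) * Real.log (S₁ / S₀)) * ∫ x in (0:ℝ)..1, (1 - x) * (S x)^2 := by
  have hS₁ : 0 < S₁ := lt_of_lt_of_le hS₀ hS₀S₁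
  have hiS : IntervalIntegrable S volume 0 1 := by
    apply intInt_bdd hmeas (C := S₁)
    intro x hx
    obtain ⟨h1, h2⟩ := hbound x hx
    exact abs_le.2 ⟨by linarith, h2⟩
  have hif1 : IntervalIntegrable (fun x => (1 - x) * (S x)^2) volume 0 1 := by
    apply intInt_bdd (by fun_prop) (C := S₁^2)
    intro x hx
    obtain ⟨h1, h2⟩ := hbound x hx
    obtain ⟨hx0, hx1⟩ := hx
    rw [abs_mul]
    calc |1 - x| * |(S x)^2| ≤ 1 * S₁^2 := by
          apply mul_le_mul
          · rw [abs_le]; constructor <;> linarith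
          · rw [abs_of_nonneg (sq_nonneg _)]; nlinarith
          · exact abs_nonneg _
          · norm_num
      _ = S₁^2 := by ring
  obtain ⟨m, hm⟩ : ∃ t : ℝ, t = ∫ x in (0:ℝ)..1, S x := ⟨_, rfl⟩
  obtain ⟨I, hI⟩ : ∃ t : ℝ, t = ∫ x in (0:ℝ)..1, (1 - x) * (S x)^2 := ⟨_, rfl⟩
  rw [← hm, ← hI]
  obtain ⟨L, hL⟩ : ∃ t : ℝ, t = Real.log (S₁/S₀) := ⟨_, rfl⟩
  rw [← hL]
  have hL0 : 0 ≤ L := hL ▸ Real.log_nonneg ((one_le_div hS₀).2 hS₀S₁)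
  have hmS₀ : S₀ ≤ m := by
    rw [hm]
    have h := intervalIntegral.integral_mono_on (by norm_num : (0:ℝ) ≤ 1)
      intervalIntegrable_const hiS (fun x hx => (hbound x hx).1)
    simpa using h
  have hmS₁ : m ≤ S₁ := by
    rw [hm]
    have h := intervalIntegral.integral_mono_on (by norm_num : (0:ℝ) ≤ 1)
      hiS intervalIntegrable_const (fun x hx => (hbound x hx).2)
    simpa using h
  have hIS₀ : S₀^2/2 ≤ I := by
    rw [hI]
    have h1 : (∫ x in (0:ℝ)..1, ((1-x)*S₀^2 - 0)) ≤ ∫ x in (0:ℝ)..1, (1 - x) * (S x)^2 := by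
      apply intervalIntegral.integral_mono_on (by norm_num)
      · exact intInt_bdd (by fun_prop) (C := S₀^2) (by
          intro x hx
          obtain ⟨hx0, hx1⟩ := hx
          rw [sub_zero, abs_mul]
          calc |1 - x| * |S₀^2| ≤ 1 * S₀^2 := by
                apply mul_le_mul
                · rw [abs_le]; constructor <;> linarith
                · rw [abs_of_nonneg (sq_nonneg _)]
                · exact abs_nonneg _
                · norm_num
            _ = S₀^2 := by ring)
      · exact hif1
      · intro x hx
        obtain ⟨hx0, hx1⟩ := hx
        obtain ⟨ha, hb'⟩ := hbound x ⟨hx0, hx1⟩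
        have h2 : S₀^2 ≤ (S x)^2 := by nlinarith
        nlinarith
    rw [poly_int] at h1
    linarith
  suffices hfin : m^2 ≤ (2+L)*I by nlinarith [hfin]
  rcases eq_or_lt_of_le hmS₀ with heq|hlt
  · rw [← heq]
    nlinarith [hIS₀, hL0, mul_nonneg hL0 (le_trans (by positivity : (0:ℝ) ≤ S₀^2/2) hIS₀)]
  · have hS₀S₁' : S₀ < S₁ := lt_of_lt_of_le hlt hmS₁
    have hLpos : 0 < L := hL ▸ Real.log_pos ((one_lt_div hS₀).2 hS₀S₁')
    rcases le_or_gt m (S₀*(1+L)) with hsmall|hlarge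
    · -- case A : b = (m - S₀)/L ∈ (0, S₀]
      obtain ⟨b, hbdef⟩ : ∃ t : ℝ, t = (m - S₀)/L := ⟨_, rfl⟩
      have hbpos : 0 < b := by rw [hbdef]; exact div_pos (by linarith) hLpos
      have hbS₀ : b ≤ S₀ := by
        rw [hbdef, div_le_iff₀ hLpos]
        nlinarith
      have hbL : b*L = m - S₀ := by rw [hbdef]; field_simp
      have hmaster := master S₀ S₁ b S hS₀ hS₀S₁ hbpos (le_trans hbS₀ hS₀S₁) hmeas hbound
      rw [← hm, ← hI] at hmaster
      have hp : max 0 (1 - b/S₀) = 1 - b/S₀ :=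
        max_eq_right (by rw [sub_nonneg]; exact (div_le_one hS₀).2 hbS₀)
      rw [hp] at hmaster
      have he1 : (1:ℝ) - (1 - b/S₀) = b/S₀ := by ring
      rw [he1] at hmaster
      have hlogs : Real.log (b/S₀) - Real.log (b/S₁) = L := by
        rw [Real.log_div hbpos.ne' hS₀.ne', Real.log_div hbpos.ne' hS₁.ne',
          hL, Real.log_div hS₁.ne' hS₀.ne']
        ring
      rw [hlogs] at hmaster
      have heq2 : (S₀^2 - 2*b*S₀)*(1 - b/S₀) - S₀^2*(1 - b/S₀)^2/2
          = S₀^2/2 - 2*b*S₀ + 3*b^2/2 := by field_simp; ring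
      have hmaster' : 2*b*m + S₀^2/2 - 2*b*S₀ - L*b^2 ≤ I := by linarith
      have hmeq : m = S₀ + b*L := by linarith
      rw [hmeq] at hmaster' ⊢
      have hmul := mul_le_mul_of_nonneg_left hmaster' (show (0:ℝ) ≤ 2+L by linarith)
      nlinarith [hmul, mul_nonneg hL0 (sq_nonneg (2*b - S₀))]
    · -- case B : b = (2m - S₀)/(2L+1) ∈ [S₀, S₁]
      obtain ⟨b, hbdef⟩ : ∃ t : ℝ, t = (2*m - S₀)/(2*L+1) := ⟨_, rfl⟩
      have h2L1 : (0:ℝ) < 2*L+1 := by linarith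
      have hbpos : 0 < b := by rw [hbdef]; exact div_pos (by linarith) h2L1
      have hbge : S₀ ≤ b := by
        rw [hbdef, le_div_iff₀ h2L1]
        nlinarith
      have hlog1 : 1 - S₀/S₁ ≤ L := by
        have h := Real.log_le_sub_one_of_pos (div_pos hS₀ hS₁)
        rw [Real.log_div hS₀.ne' hS₁.ne'] at h
        have hLd : L = Real.log S₁ - Real.log S₀ := by
          rw [hL, Real.log_div hS₁.ne' hS₀.ne']
        linarith
      have hbS₁ : b ≤ S₁ := by
        rw [hbdef, div_le_iff₀ h2L1]
        have h2 : S₁*(1 - S₀/S₁) = S₁ - S₀ := by field_simp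
        nlinarith [mul_le_mul_of_nonneg_left hlog1 hS₁.le, mul_nonneg hS₁.le hL0]
      have hbrel : b*(2*L+1) = 2*m - S₀ := by rw [hbdef]; field_simp
      have hmaster := master S₀ S₁ b S hS₀ hS₀S₁ hbpos hbS₁ hmeas hbound
      rw [← hm, ← hI] at hmaster
      have hp : max 0 (1 - b/S₀) = 0 :=
        max_eq_left (by rw [sub_nonpos]; exact (one_le_div hS₀).2 hbge)
      rw [hp] at hmaster
      have he0 : Real.log ((1:ℝ) - 0) = 0 := by norm_num
      have hlogb : Real.log (b/S₁) = Real.log b - Real.log S₁ := Real.log_div hbpos.ne' hS₁.ne'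
      have h5 := Real.log_le_sub_one_of_pos (div_pos hS₀ hbpos)
      rw [Real.log_div hS₀.ne' hbpos.ne'] at h5
      have hLd : L = Real.log S₁ - Real.log S₀ := by
        rw [hL, Real.log_div hS₁.ne' hS₀.ne']
      have hlogbd : Real.log ((1:ℝ) - 0) - Real.log (b/S₁) ≤ L + S₀/b - 1 := by
        rw [he0, hlogb]
        linarith
      have hb2 : b^2*(S₀/b) = b*S₀ := by field_simp
      have hmul1 := mul_le_mul_of_nonneg_left hlogbd (sq_nonneg b)
      have hIlb : 2*b*m - L*b^2 - b*S₀ - b^2/2 ≤ I := by nlinarith [hmaster, hmul1, hb2]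
      have hmeq : m = (b*(2*L+1) + S₀)/2 := by linarith
      rw [hmeq] at hIlb ⊢
      have hmul := mul_le_mul_of_nonneg_left hIlb (show (0:ℝ) ≤ 2+L by linarith)
      nlinarith [hmul, mul_nonneg hL0 (sq_nonneg (b - S₀)), sq_nonneg (b - S₀),
        mul_nonneg (sub_nonneg.2 hbge) hS₀.le,
        mul_nonneg hL0 (mul_nonneg (sub_nonneg.2 hbge) hS₀.le),
        mul_nonneg hL0 (mul_pos hS₀ hS₀).le]
end

section
/- Let 0 < S₀ ≤ S₁ and define S_opt : [0,1] → ℝ by S_opt(x) = S₀ for 0 ≤ x ≤ 1/2, S_opt(x) = S₀/(2(1−x)) for 1/2 < x < 1 − S₀/(2S₁), and S_opt(x) = S₁ for 1 − S₀/(2S₁) ≤ x ≤ 1. Then ∫₀¹ S_opt(x) dx = S₀·(1 + (1/2)·log(S₁/S₀)) and ∫₀¹ (1−x)·S_opt(x)² dx = (S₀²/2)·(1 + (1/2)·log(S₁/S₀)); consequently (1/2)(∫₀¹ S_opt(x)dx)² / ∫₀¹ (1−x)S_opt(x)² dx = 1 + (1/2)·log(S₁/S₀). -/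
open MeasureTheory intervalIntegral Set

/-!
Cut `[0, 1]` at `1/2` and `c = 1 - S₀ / (2 S₁)`. On the middle piece both `S` and `(1 - x) S²` are
multiples of `(1 - x)⁻¹`, namely `S₀/2` and `S₀²/4` of it, so both integrals pick up the same
logarithm `log ((1/2) / (1 - c)) = log (S₁ / S₀)`; the two constant pieces contribute `S₀` to the
first integral and `S₀²/2` to the second, whence the ratio `1 + log (S₁ / S₀) / 2`.
-/

theorem intervalIntegral.integral_eq_add_add_of_eqOn_Ioo {E : Type*} [NormedAddCommGroup E]
    [NormedSpace ℝ E] {μ : Measure ℝ} [NullSingletonClass μ] {f g₁ g₂ g₃ : ℝ → E} {a b c d : ℝ}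
    (hab : a ≤ b) (hbc : b ≤ c) (hcd : c ≤ d)
    (h₁ : EqOn f g₁ (Ioo a b)) (h₂ : EqOn f g₂ (Ioo b c)) (h₃ : EqOn f g₃ (Ioo c d))
    (hg₁ : IntervalIntegrable g₁ μ a b) (hg₂ : IntervalIntegrable g₂ μ b c)
    (hg₃ : IntervalIntegrable g₃ μ c d) :
    ∫ x in a..d, f x ∂μ =
      (∫ x in a..b, g₁ x ∂μ) + (∫ x in b..c, g₂ x ∂μ) + ∫ x in c..d, g₃ x ∂μ := by
  have hf₁ : IntervalIntegrable f μ a b := hg₁.congr_uIoo (uIoo_of_le hab ▸ h₁.symm)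
  have hf₂ : IntervalIntegrable f μ b c := hg₂.congr_uIoo (uIoo_of_le hbc ▸ h₂.symm)
  have hf₃ : IntervalIntegrable f μ c d := hg₃.congr_uIoo (uIoo_of_le hcd ▸ h₃.symm)
  rw [← integral_add_adjacent_intervals (hf₁.trans hf₂) hf₃,
    ← integral_add_adjacent_intervals hf₁ hf₂, integral_congr_Ioo_of_le hab h₁,
    integral_congr_Ioo_of_le hbc h₂, integral_congr_Ioo_of_le hcd h₃]

theorem integral_one_sub (a b : ℝ) :
    ∫ x in a..b, (1 - x) = ((1 - a) ^ 2 - (1 - b) ^ 2) / 2 := by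
  rw [integral_comp_sub_left (fun x => x), integral_id]

theorem integral_inv_one_sub {a b : ℝ} (ha : a < 1) (hb : b < 1) :
    ∫ x in a..b, (1 - x)⁻¹ = Real.log ((1 - a) / (1 - b)) := by
  rw [integral_comp_sub_left (fun x => x⁻¹),
    integral_inv (notMem_uIcc_of_lt (by linarith) (by linarith))]

theorem intervalIntegrable_inv_one_sub {a b : ℝ} (ha : a < 1) (hb : b < 1) :
    IntervalIntegrable (fun x => (1 - x)⁻¹) volume a b :=
  intervalIntegrable_inv (fun x hx => sub_ne_zero.mpr (hx.2.trans_lt (max_lt ha hb)).ne')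
    (by fun_prop)

section PiecewiseProfile

variable {S : ℝ → ℝ} {a b A k B : ℝ}

theorem integral_piecewise_inv_one_sub (ha : 0 ≤ a) (hab : a ≤ b) (hb : b < 1)
    (h₁ : EqOn S (fun _ => A) (Ioo 0 a)) (h₂ : EqOn S (fun x => k * (1 - x)⁻¹) (Ioo a b))
    (h₃ : EqOn S (fun _ => B) (Ioo b 1)) :
    ∫ x in (0:ℝ)..1, S x = A * a + k * Real.log ((1 - a) / (1 - b)) + B * (1 - b) := by
  rw [integral_eq_add_add_of_eqOn_Ioo ha hab hb.le h₁ h₂ h₃ intervalIntegrable_const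
    ((intervalIntegrable_inv_one_sub (hab.trans_lt hb) hb).const_mul k) intervalIntegrable_const,
    intervalIntegral.integral_const_mul, integral_inv_one_sub (hab.trans_lt hb) hb]
  simp only [intervalIntegral.integral_const, smul_eq_mul]
  ring

theorem integral_one_sub_mul_sq_piecewise_inv_one_sub (ha : 0 ≤ a) (hab : a ≤ b) (hb : b < 1)
    (h₁ : EqOn S (fun _ => A) (Ioo 0 a)) (h₂ : EqOn S (fun x => k * (1 - x)⁻¹) (Ioo a b))
    (h₃ : EqOn S (fun _ => B) (Ioo b 1)) :
    ∫ x in (0:ℝ)..1, (1 - x) * S x ^ 2 =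
      A ^ 2 * (1 - (1 - a) ^ 2) / 2 + k ^ 2 * Real.log ((1 - a) / (1 - b)) +
        B ^ 2 * (1 - b) ^ 2 / 2 := by
  have h₂' : EqOn (fun x => (1 - x) * S x ^ 2) (fun x => k ^ 2 * (1 - x)⁻¹) (Ioo a b) := by
    intro x hx
    have : 1 - x ≠ 0 := sub_ne_zero.mpr (hx.2.trans hb).ne'
    simp only [h₂ hx]
    field_simp
  rw [integral_eq_add_add_of_eqOn_Ioo (g₁ := fun x => A ^ 2 * (1 - x))
    (g₃ := fun x => B ^ 2 * (1 - x)) ha hab hb.le (fun x hx => by simp only [h₁ hx]; ring) h₂'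
    (fun x hx => by simp only [h₃ hx]; ring)
    (Continuous.intervalIntegrable (by fun_prop) _ _)
    ((intervalIntegrable_inv_one_sub (hab.trans_lt hb) hb).const_mul _)
    (Continuous.intervalIntegrable (by fun_prop) _ _),
    intervalIntegral.integral_const_mul, intervalIntegral.integral_const_mul,
    intervalIntegral.integral_const_mul, integral_one_sub, integral_one_sub,
    integral_inv_one_sub (hab.trans_lt hb) hb]
  ring

end PiecewiseProfile

theorem integrals_of_optimal_profile (S₀ S₁ : ℝ) (hS₀ : 0 < S₀) (hS₀S₁ : S₀ ≤ S₁)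
    (S : ℝ → ℝ)
    (h1 : ∀ x : ℝ, 0 ≤ x → x ≤ 1/2 → S x = S₀)
    (h2 : ∀ x : ℝ, 1/2 < x → x < 1 - S₀ / (2 * S₁) → S x = S₀ / (2 * (1 - x)))
    (h3 : ∀ x : ℝ, 1 - S₀ / (2 * S₁) ≤ x → x ≤ 1 → S x = S₁) :
    (∫ x in (0:ℝ)..1, S x) = S₀ * (1 + (1/2) * Real.log (S₁ / S₀)) ∧
    (∫ x in (0:ℝ)..1, (1 - x) * (S x)^2) = (S₀^2 / 2) * (1 + (1/2) * Real.log (S₁ / S₀)) ∧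
    (1/2) * (∫ x in (0:ℝ)..1, S x)^2 / (∫ x in (0:ℝ)..1, (1 - x) * (S x)^2)
      = 1 + (1/2) * Real.log (S₁ / S₀) := by
  have hS₁ : 0 < S₁ := hS₀.trans_le hS₀S₁
  set c := 1 - S₀ / (2 * S₁) with hc
  have h1c : 1 - c = S₀ / (2 * S₁) := by rw [hc]; ring
  have hc1 : c < 1 := sub_lt_self _ (by positivity)
  have hc2 : 1 / 2 ≤ c := by rw [hc, le_sub_comm, div_le_iff₀ (by positivity)]; linarith
  have hlog : Real.log ((1 - 1 / 2) / (1 - c)) = Real.log (S₁ / S₀) := by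
    rw [h1c]; congr 1; field_simp; ring
  have hS_left : EqOn S (fun _ => S₀) (Ioo 0 (1 / 2)) := fun x hx => h1 x hx.1.le hx.2.le
  have hS_mid : EqOn S (fun x => S₀ / 2 * (1 - x)⁻¹) (Ioo (1 / 2) c) :=
    fun x hx => by rw [h2 x hx.1 hx.2]; field_simp
  have hS_right : EqOn S (fun _ => S₁) (Ioo c 1) := fun x hx => h3 x hx.1.le hx.2.le
  have hI := integral_piecewise_inv_one_sub (by norm_num) hc2 hc1 hS_left hS_mid hS_right
  have hJ :=
    integral_one_sub_mul_sq_piecewise_inv_one_sub (by norm_num) hc2 hc1 hS_left hS_mid hS_right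
  rw [hlog, h1c] at hI hJ
  have hI' : (∫ x in (0:ℝ)..1, S x) = S₀ * (1 + (1/2) * Real.log (S₁ / S₀)) := by
    rw [hI]; field_simp; ring
  have hJ' : (∫ x in (0:ℝ)..1, (1 - x) * (S x)^2) =
      (S₀^2 / 2) * (1 + (1/2) * Real.log (S₁ / S₀)) := by
    rw [hJ]; field_simp; ring
  refine ⟨hI', hJ', ?_⟩
  have hpos : 0 < 1 + (1/2) * Real.log (S₁ / S₀) := by
    have := Real.log_nonneg ((one_le_div hS₀).mpr hS₀S₁); linarith
  rw [hI', hJ']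
  field_simp
end

section
/- Let 0 < S₀ ≤ S₁ and let S : [0,1] → ℝ be measurable with S₀ ≤ S(x) ≤ S₁ for all x. Then there exists a monotone non-decreasing function S̃ : [0,1] → ℝ with S₀ ≤ S̃(x) ≤ S₁ for all x, such that ∫₀¹ S̃(x) dx = ∫₀¹ S(x) dx and ∫₀¹ (1−x)·S̃(x)² dx ≤ ∫₀¹ (1−x)·S(x)² dx. -/
open MeasureTheory intervalIntegral

lemma aux_II_of_bound {f : ℝ → ℝ} (hf : Measurable f) (C : ℝ)
    (h : ∀ x ∈ Set.Icc (0:ℝ) 1, |f x| ≤ C) : IntervalIntegrable f volume 0 1 := by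
  rw [intervalIntegrable_iff_integrableOn_Ioc_of_le zero_le_one]
  refine (integrable_const C).mono' hf.aestronglyMeasurable.restrict ?_
  rw [ae_restrict_iff' measurableSet_Ioc]
  filter_upwards with x hx
  simpa using h x (Set.Ioc_subset_Icc_self hx)

theorem monotone_rearrangement_decreases_denominator (S₀ S₁ : ℝ) (hS₀ : 0 < S₀)
    (hS₀S₁ : S₀ ≤ S₁) (S : ℝ → ℝ) (hmeas : Measurable S)
    (hbound : ∀ x ∈ Set.Icc (0:ℝ) 1, S₀ ≤ S x ∧ S x ≤ S₁) :
    ∃ T : ℝ → ℝ, MonotoneOn T (Set.Icc 0 1) ∧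
      (∀ x ∈ Set.Icc (0:ℝ) 1, S₀ ≤ T x ∧ T x ≤ S₁) ∧
      (∫ x in (0:ℝ)..1, T x) = (∫ x in (0:ℝ)..1, S x) ∧
      (∫ x in (0:ℝ)..1, (1 - x) * (T x)^2) ≤ ∫ x in (0:ℝ)..1, (1 - x) * (S x)^2 := by
  have hS₁ : 0 < S₁ := lt_of_lt_of_le hS₀ hS₀S₁
  set T : ℝ → ℝ → ℝ := fun l x => if x < 1 then min S₁ (max S₀ (l / (1 - x))) else S₁ with hTdef
  -- global bounds for T
  have hTb : ∀ l x, S₀ ≤ T l x ∧ T l x ≤ S₁ := by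
    intro l x
    by_cases hx : x < 1
    · simp only [hTdef, hx, if_true]
      exact ⟨le_min hS₀S₁ (le_max_left _ _), min_le_left _ _⟩
    · simp only [hTdef, hx, if_false]
      exact ⟨hS₀S₁, le_refl _⟩
  have hTmeas : ∀ l, Measurable (T l) := by
    intro l
    refine Measurable.ite measurableSet_Iio ?_ measurable_const
    exact measurable_const.min (measurable_const.max
      (measurable_const.div (measurable_const.sub measurable_id)))
  have hTabs : ∀ l x, |T l x| ≤ S₁ := by
    intro l x
    rcases hTb l x with ⟨h1, h2⟩
    rw [abs_le]; constructor <;> nlinarith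
  have hTint : ∀ l, IntervalIntegrable (T l) volume 0 1 :=
    fun l => aux_II_of_bound (hTmeas l) S₁ (fun x _ => hTabs l x)
  have hSabs : ∀ x ∈ Set.Icc (0:ℝ) 1, |S x| ≤ S₁ := by
    intro x hx
    rcases hbound x hx with ⟨h1, h2⟩
    rw [abs_le]; constructor <;> nlinarith
  have hSint : IntervalIntegrable S volume 0 1 := aux_II_of_bound hmeas S₁ hSabs
  set c : ℝ := ∫ x in (0:ℝ)..1, S x with hc
  -- bounds on c
  have hcS₀ : S₀ ≤ c := by
    have h := intervalIntegral.integral_mono_on zero_le_one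
      (_root_.intervalIntegrable_const (c := S₀)) hSint (fun x hx => (hbound x hx).1)
    simpa using h
  have hcS₁ : c ≤ S₁ := by
    have h := intervalIntegral.integral_mono_on zero_le_one
      hSint (_root_.intervalIntegrable_const (c := S₁)) (fun x hx => (hbound x hx).2)
    simpa using h
  -- the mean function g
  set g : ℝ → ℝ := fun l => ∫ x in (0:ℝ)..1, T l x with hg
  have hgrw : ∀ l, g l = ∫ x in Set.Ioc (0:ℝ) 1, T l x := by
    intro l
    exact intervalIntegral.integral_of_le zero_le_one
  have hgcont : Continuous g := by
    have : Continuous fun l => ∫ x in Set.Ioc (0:ℝ) 1, T l x := by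
      apply MeasureTheory.continuous_of_dominated
        (bound := fun _ : ℝ => S₁)
      · exact fun l => (hTmeas l).aestronglyMeasurable.restrict
      · intro l
        filter_upwards with x
        simpa [Real.norm_eq_abs] using hTabs l x
      · exact integrable_const S₁
      · filter_upwards with x
        by_cases hx : x < 1
        · simp only [hTdef, hx, if_true]
          have h1x : (1:ℝ) - x ≠ 0 := by linarith
          exact continuous_const.min (continuous_const.max (continuous_id.div_const _))
        · simp only [hTdef, hx, if_false]
          exact continuous_const
    simpa [← hgrw] using this
  -- a.e. x ≠ 1
  have hae1 : ∀ᵐ x : ℝ, x ≠ (1:ℝ) := by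
    have : volume ({(1:ℝ)} : Set ℝ) = 0 := Real.volume_singleton
    rw [MeasureTheory.ae_iff]
    simpa [Set.setOf_eq_eq_singleton'] using this
  have hg0 : g 0 = S₀ := by
    have hcongr : ∫ x in (0:ℝ)..1, T 0 x = ∫ x in (0:ℝ)..1, (S₀ : ℝ) := by
      apply intervalIntegral.integral_congr_ae
      filter_upwards [hae1] with x hx1 hx
      have hxIoc : x ∈ Set.Ioc (0:ℝ) 1 := by
        rwa [Set.uIoc_of_le zero_le_one] at hx
      have hxlt : x < 1 := lt_of_le_of_ne hxIoc.2 hx1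
      simp [hTdef, hxlt, zero_div, max_eq_left hS₀.le, min_eq_right hS₀S₁]
    simpa [hg] using hcongr
  have hgS₁ : g S₁ = S₁ := by
    have hcongr : ∫ x in (0:ℝ)..1, T S₁ x = ∫ x in (0:ℝ)..1, (S₁ : ℝ) := by
      apply intervalIntegral.integral_congr_ae
      filter_upwards [hae1] with x hx1 hx
      have hxIoc : x ∈ Set.Ioc (0:ℝ) 1 := by
        rwa [Set.uIoc_of_le zero_le_one] at hx
      have hxlt : x < 1 := lt_of_le_of_ne hxIoc.2 hx1
      have h1x : (0:ℝ) < 1 - x := by linarith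
      have hdiv : S₁ ≤ S₁ / (1 - x) := by
        rw [le_div_iff₀ h1x]; nlinarith [hxIoc.1]
      simp [hTdef, hxlt, min_eq_left (le_trans hdiv (le_max_right _ _))]
    simpa [hg] using hcongr
  -- IVT
  obtain ⟨l, hlmem, hlc⟩ : ∃ l ∈ Set.Icc (0:ℝ) S₁, g l = c := by
    have := intermediate_value_Icc hS₁.le hgcont.continuousOn
    have hc' : c ∈ Set.Icc (g 0) (g S₁) := by
      rw [hg0, hgS₁]; exact ⟨hcS₀, hcS₁⟩
    obtain ⟨l, hl, hgl⟩ := this hc'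
    exact ⟨l, hl, hgl⟩
  have hl0 : 0 ≤ l := hlmem.1
  refine ⟨T l, ?_, fun x _ => hTb l x, hlc, ?_⟩
  · -- monotone
    intro x hx y hy hxy
    by_cases hy1 : y < 1
    · have hx1 : x < 1 := lt_of_le_of_lt hxy hy1
      simp only [hTdef, hx1, hy1, if_true]
      refine min_le_min le_rfl (max_le_max le_rfl ?_)
      have h1y : (0:ℝ) < 1 - y := by linarith
      have h1xy : 1 - y ≤ 1 - x := by linarith
      exact div_le_div_of_nonneg_left hl0 h1y h1xy
    · have : T l y = S₁ := by simp [hTdef, hy1]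
      rw [this]
      exact (hTb l x).2
  · -- the key inequality
    have hkey : ∀ x ∈ Set.Icc (0:ℝ) 1,
        (1 - x) * (T l x)^2 + 2 * l * (S x - T l x) ≤ (1 - x) * (S x)^2 := by
      intro x hx
      rcases hbound x hx with ⟨hb1, hb2⟩
      by_cases hx1 : x < 1
      · have h1x : (0:ℝ) < 1 - x := by linarith
        simp only [hTdef, hx1, if_true]
        rcases le_or_gt (l / (1 - x)) S₀ with hcase | hcase
        · have ht : min S₁ (max S₀ (l / (1 - x))) = S₀ := by
            rw [max_eq_left hcase, min_eq_right hS₀S₁]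
          rw [ht]
          have hls : l ≤ (1 - x) * S₀ := by
            rw [div_le_iff₀ h1x] at hcase; linarith
          nlinarith [sq_nonneg (S x - S₀)]
        · rcases le_or_gt S₁ (l / (1 - x)) with hcase2 | hcase2
          · have ht : min S₁ (max S₀ (l / (1 - x))) = S₁ := by
              rw [min_eq_left (le_trans hcase2 (le_max_right _ _))]
            rw [ht]
            have hls : (1 - x) * S₁ ≤ l := by
              rw [le_div_iff₀ h1x] at hcase2; linarith
            nlinarith [sq_nonneg (S x - S₁)]
          · have ht : min S₁ (max S₀ (l / (1 - x))) = l / (1 - x) := by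
              rw [max_eq_right hcase.le, min_eq_right hcase2.le]
            rw [ht]
            have heq : (1 - x) * (l / (1 - x)) = l := by
              field_simp
            nlinarith [sq_nonneg (S x - l / (1 - x)), mul_pos h1x (lt_of_lt_of_le hS₀ hcase.le)]
      · have hx1' : x = 1 := le_antisymm hx.2 (not_lt.mp hx1)
        simp only [hTdef, hx1, if_false]
        subst hx1'
        nlinarith
    -- integrability of pieces
    have hintA : IntervalIntegrable (fun x => (1 - x) * (T l x)^2) volume 0 1 := by
      apply aux_II_of_bound
      · exact (measurable_const.sub measurable_id).mul ((hTmeas l).pow_const 2)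
      · intro x hx
        have h1 : |1 - x| ≤ 1 := by
          rw [abs_le]; constructor <;> [linarith [hx.2]; linarith [hx.1]]
        have h2 : |(T l x)^2| ≤ S₁^2 := by
          rw [abs_le]
          constructor
          · nlinarith [sq_nonneg (T l x), sq_nonneg S₁]
          · nlinarith [hTabs l x, abs_nonneg (T l x), sq_abs (T l x), (hTb l x).1]
        calc |(1 - x) * (T l x)^2| = |1 - x| * |(T l x)^2| := abs_mul _ _
          _ ≤ 1 * S₁^2 := by
              apply mul_le_mul h1 h2 (abs_nonneg _) zero_le_one
          _ = S₁^2 := one_mul _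
    have hintB : IntervalIntegrable (fun x => 2 * l * (S x - T l x)) volume 0 1 := by
      exact (hSint.sub (hTint l)).const_mul _
    have hintC : IntervalIntegrable (fun x => (1 - x) * (S x)^2) volume 0 1 := by
      apply aux_II_of_bound
      · exact (measurable_const.sub measurable_id).mul (hmeas.pow_const 2)
      · intro x hx
        have h1 : |1 - x| ≤ 1 := by
          rw [abs_le]; constructor <;> [linarith [hx.2]; linarith [hx.1]]
        have h2 : |(S x)^2| ≤ S₁^2 := by
          rw [abs_le]
          constructor
          · nlinarith [sq_nonneg (S x), sq_nonneg S₁]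
          · nlinarith [hSabs x hx, abs_nonneg (S x), sq_abs (S x), (hbound x hx).1]
        calc |(1 - x) * (S x)^2| = |1 - x| * |(S x)^2| := abs_mul _ _
          _ ≤ 1 * S₁^2 := by
              apply mul_le_mul h1 h2 (abs_nonneg _) zero_le_one
          _ = S₁^2 := one_mul _
    have hmono := intervalIntegral.integral_mono_on zero_le_one (hintA.add hintB) hintC hkey
    have hsplit : (∫ x in (0:ℝ)..1, ((1 - x) * (T l x)^2 + 2 * l * (S x - T l x)))
        = (∫ x in (0:ℝ)..1, (1 - x) * (T l x)^2) + 2 * l * ((∫ x in (0:ℝ)..1, S x) - (∫ x in (0:ℝ)..1, T l x)) := by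
      rw [intervalIntegral.integral_add hintA hintB,
        intervalIntegral.integral_const_mul, intervalIntegral.integral_sub hSint (hTint l)]
    rw [hsplit] at hmono
    have : (∫ x in (0:ℝ)..1, T l x) = ∫ x in (0:ℝ)..1, S x := hlc
    rw [this] at hmono
    simpa using hmono
end

section
/- Let 0 < S₀ ≤ S₁, let 0 ≤ x₀ < x₁ ≤ 1, and let q > 0. Define S : [0,1] → ℝ by S(x) = S₀ on [0,x₀], S(x) = q/(1−x) on (x₀,x₁), and S(x) = S₁ on [x₁,1], and assume S is non-decreasing with S₀ ≤ S(x) ≤ S₁. If S maximizes F[·] := (1/2)(∫₀¹ · dx)² / ∫₀¹ (1−x)(·)² dx over all measurable functions on [0,1] with values in [S₀,S₁], then S is continuous at x₀ and at x₁; that is, q = (1−x₀)·S₀ and q = (1−x₁)·S₁, so x₀ = 1 − q/S₀ and x₁ = 1 − q/S₁. -/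
open MeasureTheory intervalIntegral

/-- The functional `F[S] = (1/2)(∫₀¹ S dx)² / ∫₀¹ (1−x) S² dx`. -/
noncomputable def coolingFunctional (S : ℝ → ℝ) : ℝ :=
  (1/2) * (∫ x in (0:ℝ)..1, S x)^2 / ∫ x in (0:ℝ)..1, (1 - x) * (S x)^2

/-!
Write `N = ∫ S` and `D = ∫ (1 - x) S²`. Adding `c` to a maximizer `S` on an interval `(u, v)`
changes `F` to first order by a positive multiple of `c · ((v - u) D - N ∫ᵤᵛ (1 - x) S)`. Hence
`D / N` is at most the mean of `(1 - x) S` over any interval where `S` can be raised, and at least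
that mean where `S` can be lowered. On the middle segment `(1 - x) S = q`, and the constraint
`S₀ ≤ q / (1 - x) ≤ S₁` there gives `(1 - x₀) S₀ ≤ q ≤ (1 - x₁) S₁`.

If `q < (1 - x₁) S₁`, the middle segment can be raised, so `D / N ≤ q`, while just after `x₁` the
top segment can be lowered where `(1 - x) S₁ > q`: a contradiction. If `q > (1 - x₀) S₀`, the
middle segment can be lowered, so `q ≤ D / N`. For `x₀ > 0` the bottom segment can be raised just
before `x₀`, where `(1 - x) S₀ < q`. For `x₀ = 0` there is no room there, but `D = ∫ S · (1 - x) S`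
makes `D / N` an `S`-weighted mean of `(1 - x) S`, which is at most `q` everywhere and strictly less
on `(x₁, 1)`.
-/

open Set Filter Topology

def IsAdmissibleProfile (S₀ S₁ : ℝ) (T : ℝ → ℝ) : Prop :=
  Measurable T ∧ ∀ x ∈ Icc (0:ℝ) 1, S₀ ≤ T x ∧ T x ≤ S₁

def IsOptimalProfile (S₀ S₁ : ℝ) (S : ℝ → ℝ) : Prop :=
  ∀ T, IsAdmissibleProfile S₀ S₁ T → coolingFunctional T ≤ coolingFunctional S

lemma nonpos_of_forall_mul_le_sq {A K ε : ℝ} (hε : 0 < ε)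
    (h : ∀ c ∈ Ioc 0 ε, c * A ≤ c ^ 2 * K) : A ≤ 0 := by
  have hlim : Tendsto (fun c : ℝ => c * K) (𝓝[>] 0) (𝓝 0) := by
    simpa using ((continuous_mul_const K).tendsto 0).mono_left nhdsWithin_le_nhds
  refine ge_of_tendsto hlim ?_
  filter_upwards [Ioc_mem_nhdsGT hε] with c hc
  exact le_of_mul_le_mul_left (by nlinarith [h c hc]) hc.1

lemma nonneg_of_forall_mul_le_sq {A K ε : ℝ} (hε : 0 < ε)
    (h : ∀ c ∈ Ico (-ε) 0, c * A ≤ c ^ 2 * K) : 0 ≤ A := by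
  have := nonpos_of_forall_mul_le_sq (A := -A) (K := K) hε fun c hc => by
    linear_combination h (-c) ⟨neg_le_neg hc.2, neg_lt_zero.2 hc.1⟩
  linarith

lemma intervalIntegrable_of_abs_le {f : ℝ → ℝ} (hf : Measurable f) {a b C : ℝ} (hab : a ≤ b)
    (h : ∀ x ∈ Icc a b, |f x| ≤ C) : IntervalIntegrable f volume a b :=
  (intervalIntegrable_iff_integrableOn_Ioc_of_le hab).2 <|
    Measure.integrableOn_of_bounded measure_Ioc_lt_top.ne hf.aestronglyMeasurable <|
      (ae_restrict_iff' measurableSet_Ioc).2 <| .of_forall fun x hx =>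
        h x (Ioc_subset_Icc_self hx)

lemma IntervalIntegrable.indicator_Ioo {f : ℝ → ℝ} {a b : ℝ} (hf : IntervalIntegrable f volume a b)
    (hab : a ≤ b) (u v : ℝ) : IntervalIntegrable ((Ioo u v).indicator f) volume a b :=
  (intervalIntegrable_iff_integrableOn_Ioc_of_le hab).2 <|
    ((intervalIntegrable_iff_integrableOn_Ioc_of_le hab).1 hf).indicator measurableSet_Ioo

lemma integral_indicator_Ioo {f : ℝ → ℝ} {a b u v : ℝ} (hau : a ≤ u) (huv : u ≤ v)
    (hvb : v ≤ b) : ∫ x in a..b, (Ioo u v).indicator f x = ∫ x in u..v, f x := by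
  rw [integral_of_le (hau.trans (huv.trans hvb)), integral_of_le huv,
    MeasureTheory.integral_indicator measurableSet_Ioo, Measure.restrict_restrict measurableSet_Ioo,
    integral_Ioc_eq_integral_Ioo,
    inter_eq_left.2 (Ioo_subset_Ioc_self.trans (Ioc_subset_Ioc hau hvb))]

section Bump

variable {T : ℝ → ℝ} {a b u v : ℝ}

lemma integral_add_indicator_Ioo (hT : IntervalIntegrable T volume a b) (hau : a ≤ u)
    (huv : u ≤ v) (hvb : v ≤ b) (c : ℝ) :
    ∫ x in a..b, (T + (Ioo u v).indicator fun _ => c) x = (∫ x in a..b, T x) + c * (v - u) := by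
  have hab := hau.trans (huv.trans hvb)
  simp only [Pi.add_apply]
  rw [integral_add hT (intervalIntegrable_const.indicator_Ioo hab u v),
    integral_indicator_Ioo hau huv hvb, intervalIntegral.integral_const, smul_eq_mul, mul_comm]

lemma integral_weighted_sq_add_indicator_Ioo (hT : IntervalIntegrable T volume a b)
    (hT2 : IntervalIntegrable (fun x => (1 - x) * T x ^ 2) volume a b) (hau : a ≤ u)
    (huv : u ≤ v) (hvb : v ≤ b) (c : ℝ) :
    ∫ x in a..b, (1 - x) * (T + (Ioo u v).indicator fun _ => c) x ^ 2 =
      (∫ x in a..b, (1 - x) * T x ^ 2) + 2 * c * (∫ x in u..v, (1 - x) * T x) +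
        c ^ 2 * ∫ x in u..v, (1 - x) := by
  have hab := hau.trans (huv.trans hvb)
  have hparts : ∀ {a' b' : ℝ}, IntervalIntegrable T volume a' b' →
      IntervalIntegrable (fun x => 2 * c * ((1 - x) * T x)) volume a' b' ∧
        IntervalIntegrable (fun x : ℝ => c ^ 2 * (1 - x)) volume a' b' := fun h =>
    ⟨(h.continuousOn_mul (by fun_prop)).const_mul _,
      (by fun_prop : Continuous fun x : ℝ => c ^ 2 * (1 - x)).intervalIntegrable _ _⟩
  have hTuv : IntervalIntegrable T volume u v := hT.mono_set (by
    rw [uIcc_of_le huv, uIcc_of_le hab]; exact Icc_subset_Icc hau hvb)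
  have hpt : ∀ x, (1 - x) * (T + (Ioo u v).indicator fun _ => c) x ^ 2 = (1 - x) * T x ^ 2 +
      (Ioo u v).indicator (fun x => 2 * c * ((1 - x) * T x) + c ^ 2 * (1 - x)) x := by
    intro x
    by_cases hx : x ∈ Ioo u v <;> simp [hx]
    ring
  simp_rw [hpt]
  rw [intervalIntegral.integral_add hT2 (((hparts hT).1.add (hparts hT).2).indicator_Ioo hab u v),
    integral_indicator_Ioo hau huv hvb, intervalIntegral.integral_add (hparts hTuv).1
      (hparts hTuv).2, intervalIntegral.integral_const_mul, intervalIntegral.integral_const_mul,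
    add_assoc]

end Bump

section Admissible

variable {S₀ S₁ : ℝ} {T : ℝ → ℝ}

lemma IsAdmissibleProfile.le (hT : IsAdmissibleProfile S₀ S₁ T) : S₀ ≤ S₁ :=
  (hT.2 0 ⟨le_rfl, zero_le_one⟩).1.trans (hT.2 0 ⟨le_rfl, zero_le_one⟩).2

lemma IsAdmissibleProfile.intervalIntegrable (hT : IsAdmissibleProfile S₀ S₁ T) :
    IntervalIntegrable T volume 0 1 :=
  intervalIntegrable_of_abs_le hT.1 zero_le_one fun x hx =>
    abs_le_max_abs_abs (hT.2 x hx).1 (hT.2 x hx).2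

lemma IsAdmissibleProfile.intervalIntegrable_weighted_sq (hT : IsAdmissibleProfile S₀ S₁ T) :
    IntervalIntegrable (fun x => (1 - x) * T x ^ 2) volume 0 1 := by
  refine intervalIntegrable_of_abs_le (by have := hT.1; fun_prop) zero_le_one
    (C := max |S₀| |S₁| ^ 2) fun x hx => ?_
  have hTx := abs_le_max_abs_abs (hT.2 x hx).1 (hT.2 x hx).2
  rw [abs_mul, abs_pow, abs_of_nonneg (sub_nonneg.2 hx.2)]
  calc (1 - x) * |T x| ^ 2 ≤ 1 * max |S₀| |S₁| ^ 2 := by gcongr; linarith [hx.1]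
    _ = max |S₀| |S₁| ^ 2 := one_mul _

lemma IsAdmissibleProfile.intervalIntegrable_weighted (hT : IsAdmissibleProfile S₀ S₁ T)
    {u v : ℝ} (hu : 0 ≤ u) (huv : u ≤ v) (hv : v ≤ 1) :
    IntervalIntegrable (fun x => (1 - x) * T x) volume u v :=
  (hT.intervalIntegrable.mono_set (by
    rw [uIcc_of_le huv, uIcc_of_le zero_le_one]; exact Icc_subset_Icc hu hv)).continuousOn_mul
    (by fun_prop)

lemma IsAdmissibleProfile.integral_pos (hT : IsAdmissibleProfile S₀ S₁ T) (hS₀ : 0 < S₀) :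
    0 < ∫ x in (0:ℝ)..1, T x :=
  intervalIntegral_pos_of_pos_on hT.intervalIntegrable
    (fun x hx => hS₀.trans_le (hT.2 x (Ioo_subset_Icc_self hx)).1) zero_lt_one

lemma IsAdmissibleProfile.integral_weighted_sq_pos (hT : IsAdmissibleProfile S₀ S₁ T)
    (hS₀ : 0 < S₀) : 0 < ∫ x in (0:ℝ)..1, (1 - x) * T x ^ 2 :=
  intervalIntegral_pos_of_pos_on hT.intervalIntegrable_weighted_sq
    (fun x hx => mul_pos (sub_pos.2 hx.2)
      (pow_pos (hS₀.trans_le (hT.2 x (Ioo_subset_Icc_self hx)).1) 2)) zero_lt_one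

lemma IsAdmissibleProfile.add_indicator_Ioo (hT : IsAdmissibleProfile S₀ S₁ T) {u v c : ℝ}
    (hc : ∀ x ∈ Ioo u v, S₀ ≤ T x + c ∧ T x + c ≤ S₁) :
    IsAdmissibleProfile S₀ S₁ (T + (Ioo u v).indicator fun _ => c) :=
  ⟨hT.1.add (measurable_const.indicator measurableSet_Ioo), fun x hx => by
    by_cases hxI : x ∈ Ioo u v <;> simp [hxI, hc x, hT.2 x hx]⟩

lemma IsAdmissibleProfile.integral_weighted_sq_lt_of_one_sub_mul_le
    (hT : IsAdmissibleProfile S₀ S₁ T) (hS₀ : 0 < S₀) {a q : ℝ} (ha : 0 ≤ a) (ha1 : a < 1)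
    (hle : ∀ x ∈ Icc 0 1, (1 - x) * T x ≤ q)
    (hlt : ∀ x ∈ Ioo a 1, (1 - x) * T x < q) :
    ∫ x in (0:ℝ)..1, (1 - x) * T x ^ 2 < (∫ x in (0:ℝ)..1, T x) * q := by
  have hpos : ∀ x ∈ Icc (0:ℝ) 1, 0 < T x := fun x hx => hS₀.trans_le (hT.2 x hx).1
  have hg : IntervalIntegrable (fun x => T x * q - (1 - x) * T x ^ 2) volume 0 1 :=
    (hT.intervalIntegrable.mul_const q).sub hT.intervalIntegrable_weighted_sq
  have haI : a ∈ uIcc 0 1 := by rw [uIcc_of_le zero_le_one]; exact ⟨ha, ha1.le⟩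
  have hleft : 0 ≤ ∫ x in (0:ℝ)..a, (T x * q - (1 - x) * T x ^ 2) :=
    integral_nonneg ha fun x hx => by
      have hx' : x ∈ Icc (0:ℝ) 1 := ⟨hx.1, hx.2.trans ha1.le⟩
      nlinarith [hle x hx', hpos x hx']
  have hright : 0 < ∫ x in a..1, (T x * q - (1 - x) * T x ^ 2) :=
    intervalIntegral_pos_of_pos_on (hg.mono_set (uIcc_subset_uIcc_right haI)) (fun x hx => by
      have hx' : x ∈ Icc (0:ℝ) 1 := ⟨ha.trans hx.1.le, hx.2.le⟩
      nlinarith [hlt x hx, hpos x hx']) ha1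
  have hsum := integral_add_adjacent_intervals (hg.mono_set (uIcc_subset_uIcc_left haI))
    (hg.mono_set (uIcc_subset_uIcc_right haI))
  rw [intervalIntegral.integral_sub (hT.intervalIntegrable.mul_const q)
    hT.intervalIntegrable_weighted_sq, intervalIntegral.integral_mul_const] at hsum
  linarith

end Admissible

section FirstVariation

variable {S₀ S₁ u v : ℝ} {S : ℝ → ℝ}

/-- The expansion of `F (S + c • 𝟙_(u, v)) ≤ F S` in `c`, keeping only the existence of the
second-order coefficient. -/
lemma IsOptimalProfile.exists_first_variation (hopt : IsOptimalProfile S₀ S₁ S)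
    (hS : IsAdmissibleProfile S₀ S₁ S) (hS₀ : 0 < S₀) (hu : 0 ≤ u) (huv : u ≤ v) (hv : v ≤ 1) :
    ∃ K, ∀ c, (∀ x ∈ Ioo u v, S₀ ≤ S x + c ∧ S x + c ≤ S₁) →
      c * ((v - u) * (∫ x in (0:ℝ)..1, (1 - x) * S x ^ 2) -
        (∫ x in (0:ℝ)..1, S x) * ∫ x in u..v, (1 - x) * S x) ≤ c ^ 2 * K := by
  set N := ∫ x in (0:ℝ)..1, S x
  set D := ∫ x in (0:ℝ)..1, (1 - x) * S x ^ 2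
  have hN : 0 < N := hS.integral_pos hS₀
  have hD : 0 < D := hS.integral_weighted_sq_pos hS₀
  refine ⟨(N ^ 2 * (∫ x in u..v, (1 - x)) - (v - u) ^ 2 * D) / (2 * N), fun c hc => ?_⟩
  have hT := hS.add_indicator_Ioo hc
  have hDT := hT.integral_weighted_sq_pos hS₀
  have hF := hopt _ hT
  rw [integral_weighted_sq_add_indicator_Ioo hS.intervalIntegrable
    hS.intervalIntegrable_weighted_sq hu huv hv] at hDT
  rw [coolingFunctional, coolingFunctional, integral_add_indicator_Ioo hS.intervalIntegrable hu
    huv hv, integral_weighted_sq_add_indicator_Ioo hS.intervalIntegrable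
    hS.intervalIntegrable_weighted_sq hu huv hv, div_le_div_iff₀ hDT hD] at hF
  rw [mul_div_assoc', le_div_iff₀ (by positivity)]
  linear_combination 2 * hF

lemma IsOptimalProfile.integral_weighted_sq_le_of_raise (hopt : IsOptimalProfile S₀ S₁ S)
    (hS : IsAdmissibleProfile S₀ S₁ S) (hS₀ : 0 < S₀) (hu : 0 ≤ u) (huv : u < v) (hv : v ≤ 1)
    {ε m : ℝ} (hε : 0 < ε) (hroom : ∀ x ∈ Ioo u v, S x + ε ≤ S₁)
    (hm : ∀ x ∈ Ioo u v, (1 - x) * S x ≤ m) :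
    ∫ x in (0:ℝ)..1, (1 - x) * S x ^ 2 ≤ (∫ x in (0:ℝ)..1, S x) * m := by
  have hIcc : Ioo u v ⊆ Icc 0 1 := Ioo_subset_Icc_self.trans (Icc_subset_Icc hu hv)
  obtain ⟨K, hK⟩ := hopt.exists_first_variation hS hS₀ hu huv.le hv
  have hvar := nonpos_of_forall_mul_le_sq hε fun c hc => hK c fun x hx =>
    ⟨by linarith [(hS.2 x (hIcc hx)).1, hc.1], by linarith [hroom x hx, hc.2]⟩
  have hM : ∫ x in u..v, (1 - x) * S x ≤ m * (v - u) := by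
    simpa [mul_comm] using integral_mono_on_of_le_Ioo huv.le
      (hS.intervalIntegrable_weighted hu huv.le hv) intervalIntegrable_const hm
  nlinarith [hS.integral_pos hS₀]

lemma IsOptimalProfile.le_integral_weighted_sq_of_lower (hopt : IsOptimalProfile S₀ S₁ S)
    (hS : IsAdmissibleProfile S₀ S₁ S) (hS₀ : 0 < S₀) (hu : 0 ≤ u) (huv : u < v) (hv : v ≤ 1)
    {ε m : ℝ} (hε : 0 < ε) (hroom : ∀ x ∈ Ioo u v, S₀ ≤ S x - ε)
    (hm : ∀ x ∈ Ioo u v, m ≤ (1 - x) * S x) :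
    (∫ x in (0:ℝ)..1, S x) * m ≤ ∫ x in (0:ℝ)..1, (1 - x) * S x ^ 2 := by
  have hIcc : Ioo u v ⊆ Icc 0 1 := Ioo_subset_Icc_self.trans (Icc_subset_Icc hu hv)
  obtain ⟨K, hK⟩ := hopt.exists_first_variation hS hS₀ hu huv.le hv
  have hvar := nonneg_of_forall_mul_le_sq hε fun c hc => hK c fun x hx =>
    ⟨by linarith [hroom x hx, hc.1], by linarith [(hS.2 x (hIcc hx)).2, hc.2]⟩
  have hM : m * (v - u) ≤ ∫ x in u..v, (1 - x) * S x := by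
    simpa [mul_comm] using integral_mono_on_of_le_Ioo huv.le intervalIntegrable_const
      (hS.intervalIntegrable_weighted hu huv.le hv) hm
  nlinarith [hS.integral_pos hS₀]

end FirstVariation

section Junctions

variable {S₀ S₁ x₀ x₁ q : ℝ} {S : ℝ → ℝ}

lemma one_sub_mul_le_and_le_one_sub_mul (hx₀x₁ : x₀ < x₁) (hx₁ : x₁ ≤ 1)
    (h : ∀ x ∈ Ioo x₀ x₁, S₀ ≤ q / (1 - x) ∧ q / (1 - x) ≤ S₁) :
    (1 - x₀) * S₀ ≤ q ∧ q ≤ (1 - x₁) * S₁ := by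
  have hpos : ∀ x ∈ Ioo x₀ x₁, 0 < 1 - x := fun x hx => by linarith [hx.2]
  have hcl : closure (Ioo x₀ x₁) = Icc x₀ x₁ := closure_Ioo hx₀x₁.ne
  constructor
  · refine le_on_closure (f := fun x => (1 - x) * S₀) (g := fun _ => q) (fun x hx => ?_)
      (by fun_prop) (by fun_prop) (x := x₀) (by rw [hcl]; exact left_mem_Icc.2 hx₀x₁.le)
    simpa [le_div_iff₀ (hpos x hx), mul_comm] using (h x hx).1
  · refine le_on_closure (f := fun _ => q) (g := fun x => (1 - x) * S₁) (fun x hx => ?_)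
      (by fun_prop) (by fun_prop) (x := x₁) (by rw [hcl]; exact right_mem_Icc.2 hx₀x₁.le)
    simpa [div_le_iff₀ (hpos x hx), mul_comm] using (h x hx).2

lemma IsOptimalProfile.eq_at_right_junction (hopt : IsOptimalProfile S₀ S₁ S)
    (hS : IsAdmissibleProfile S₀ S₁ S) (hS₀ : 0 < S₀) (hq : 0 < q) (hx₀ : 0 ≤ x₀)
    (hx₀x₁ : x₀ < x₁) (hx₁ : x₁ ≤ 1) (hmid : ∀ x ∈ Ioo x₀ x₁, S x = q / (1 - x))
    (hright : ∀ x ∈ Icc x₁ 1, S x = S₁) (hq₁ : q ≤ (1 - x₁) * S₁) : q = (1 - x₁) * S₁ := by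
  refine hq₁.eq_or_lt.resolve_right fun hlt => ?_
  have hS₁ : 0 < S₁ := hS₀.trans_le hS.le
  have hx₁1 : x₁ < 1 := by nlinarith
  have hN := hS.integral_pos hS₀
  have hroom : ∀ x ∈ Ioo x₀ x₁, S x + (S₁ - q / (1 - x₁)) ≤ S₁ := fun x hx => by
    rw [hmid x hx]
    linarith [div_le_div_of_nonneg_left hq.le (sub_pos.2 hx₁1)
      (by linarith [hx.2] : 1 - x₁ ≤ 1 - x)]
  have hraise := hopt.integral_weighted_sq_le_of_raise hS hS₀ hx₀ hx₀x₁ hx₁ (m := q)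
    (by rwa [sub_pos, div_lt_iff₀ (sub_pos.2 hx₁1), mul_comm]) hroom fun x hx => by
      rw [hmid x hx, mul_div_cancel₀ _ (by linarith [hx.2] : (1:ℝ) - x ≠ 0)]
  have hS₀S₁ : S₀ < S₁ := by
    obtain ⟨x, hx⟩ := nonempty_Ioo.2 hx₀x₁
    have : q / (1 - x₁) < S₁ := by rwa [div_lt_iff₀ (sub_pos.2 hx₁1), mul_comm]
    linarith [(hS.2 x ⟨hx₀.trans hx.1.le, hx.2.le.trans hx₁⟩).1, hroom x hx]
  obtain ⟨b, hx₁b, hb⟩ := exists_between (show x₁ < 1 - q / S₁ by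
    rwa [lt_sub_comm, div_lt_iff₀ hS₁])
  have hqb : q < (1 - b) * S₁ := by rw [← div_lt_iff₀ hS₁]; linarith
  have hb1 : b ≤ 1 := by linarith [div_pos hq hS₁]
  have hlower := hopt.le_integral_weighted_sq_of_lower hS hS₀ (hx₀.trans hx₀x₁.le) hx₁b hb1
    (m := (1 - b) * S₁)
    (sub_pos.2 hS₀S₁) (fun x hx => by rw [hright x ⟨hx.1.le, hx.2.le.trans hb1⟩]; linarith)
    fun x hx => by rw [hright x ⟨hx.1.le, hx.2.le.trans hb1⟩]; nlinarith [hx.2]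
  nlinarith

lemma IsOptimalProfile.eq_at_left_junction (hopt : IsOptimalProfile S₀ S₁ S)
    (hS : IsAdmissibleProfile S₀ S₁ S) (hS₀ : 0 < S₀) (hx₀ : 0 ≤ x₀) (hx₀x₁ : x₀ < x₁)
    (hx₁ : x₁ ≤ 1) (hleft : ∀ x ∈ Icc 0 x₀, S x = S₀) (hmid : ∀ x ∈ Ioo x₀ x₁, S x = q / (1 - x))
    (hright : ∀ x ∈ Icc x₁ 1, S x = S₁) (hq₀ : (1 - x₀) * S₀ ≤ q) (hq₁ : q = (1 - x₁) * S₁) :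
    q = (1 - x₀) * S₀ := by
  refine (hq₀.eq_or_lt.resolve_right fun hlt => ?_).symm
  have hx₀1 : x₀ < 1 := hx₀x₁.trans_le hx₁
  have hq : 0 < q := (mul_pos (sub_pos.2 hx₀1) hS₀).trans hlt
  have hN := hS.integral_pos hS₀
  have hroom : ∀ x ∈ Ioo x₀ x₁, S₀ ≤ S x - (q / (1 - x₀) - S₀) := fun x hx => by
    rw [hmid x hx]
    linarith [div_le_div_of_nonneg_left hq.le (by linarith [hx.2] : 0 < 1 - x)
      (by linarith [hx.1] : 1 - x ≤ 1 - x₀)]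
  have hlower := hopt.le_integral_weighted_sq_of_lower hS hS₀ hx₀ hx₀x₁ hx₁ (m := q)
    (by rwa [sub_pos, lt_div_iff₀ (sub_pos.2 hx₀1), mul_comm]) hroom fun x hx => by
      rw [hmid x hx, mul_div_cancel₀ _ (by linarith [hx.2] : (1:ℝ) - x ≠ 0)]
  rcases hx₀.eq_or_lt with rfl | hx₀pos
  · have hx₁1 : x₁ < 1 := by
      refine hx₁.lt_of_ne fun h => ?_
      rw [h, sub_self, zero_mul] at hq₁
      exact hq.ne' hq₁
    refine (hS.integral_weighted_sq_lt_of_one_sub_mul_le hS₀ hx₀x₁.le hx₁1 (fun x hx => ?_)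
      fun x hx => ?_).not_ge hlower
    · rcases hx.1.eq_or_lt with rfl | hx0
      · rwa [hleft 0 ⟨le_rfl, le_rfl⟩]
      rcases lt_or_ge x x₁ with hxx₁ | hxx₁
      · rw [hmid x ⟨hx0, hxx₁⟩, mul_div_cancel₀ _ (by linarith : (1:ℝ) - x ≠ 0)]
      · rw [hright x ⟨hxx₁, hx.2⟩, hq₁]
        nlinarith [hS₀.trans_le hS.le]
    · rw [hright x ⟨hx.1.le, hx.2.le⟩, hq₁]
      nlinarith [hS₀.trans_le hS.le, hx.1]
  · have hS₀S₁ : S₀ < S₁ := by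
      obtain ⟨x, hx⟩ := nonempty_Ioo.2 hx₀x₁
      have : S₀ < q / (1 - x₀) := by rwa [lt_div_iff₀ (sub_pos.2 hx₀1), mul_comm]
      linarith [(hS.2 x ⟨hx₀.trans hx.1.le, hx.2.le.trans hx₁⟩).2, hroom x hx]
    obtain ⟨a, ha, hax₀⟩ := exists_between (max_lt hx₀pos (show 1 - q / S₀ < x₀ by
      rwa [sub_lt_comm, lt_div_iff₀ hS₀]))
    have ha0 : 0 ≤ a := (le_max_left _ _).trans ha.le
    have haq : (1 - a) * S₀ < q := by
      rw [← lt_div_iff₀ hS₀]; linarith [(le_max_right 0 (1 - q / S₀)).trans_lt ha]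
    have hraise := hopt.integral_weighted_sq_le_of_raise hS hS₀ ha0 hax₀ hx₀1.le (m := (1 - a) * S₀)
      (sub_pos.2 hS₀S₁) (fun x hx => by rw [hleft x ⟨ha0.trans hx.1.le, hx.2.le⟩]; linarith)
      fun x hx => by rw [hleft x ⟨ha0.trans hx.1.le, hx.2.le⟩]; nlinarith [hx.1]
    nlinarith

end Junctions

lemma coolingFunctional_congr {S T : ℝ → ℝ} (h : EqOn S T (Icc 0 1)) :
    coolingFunctional S = coolingFunctional T := by
  rw [← uIcc_of_le zero_le_one] at h
  have hD : ∫ x in (0:ℝ)..1, (1 - x) * S x ^ 2 = ∫ x in (0:ℝ)..1, (1 - x) * T x ^ 2 :=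
    integral_congr fun x hx => by simp only [h hx]
  rw [coolingFunctional, coolingFunctional, integral_congr h, hD]

lemma exists_measurable_eqOn_of_three_segments {S₀ S₁ x₀ x₁ q : ℝ} {S : ℝ → ℝ}
    (hleft : ∀ x ∈ Icc 0 x₀, S x = S₀) (hmid : ∀ x ∈ Ioo x₀ x₁, S x = q / (1 - x))
    (hright : ∀ x ∈ Icc x₁ 1, S x = S₁) :
    ∃ P : ℝ → ℝ, Measurable P ∧ EqOn S P (Icc 0 1) := by
  refine ⟨fun x => if x ≤ x₀ then S₀ else if x < x₁ then q / (1 - x) else S₁,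
    Measurable.ite measurableSet_Iic measurable_const
      (Measurable.ite measurableSet_Iio (by fun_prop) measurable_const), fun x hx => ?_⟩
  dsimp only
  split_ifs with h₀ h₁
  · exact hleft x ⟨hx.1, h₀⟩
  · exact hmid x ⟨not_le.1 h₀, h₁⟩
  · exact hright x ⟨not_lt.1 h₁, hx.2⟩

theorem optimal_profile_continuous_at_junctions_general (S₀ S₁ x₀ x₁ q : ℝ)
    (hS₀ : 0 < S₀) (hS₀S₁ : S₀ ≤ S₁)
    (hx₀ : 0 ≤ x₀) (hx₀x₁ : x₀ < x₁) (hx₁ : x₁ ≤ 1) (hq : 0 < q)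
    (S : ℝ → ℝ)
    (hleft : ∀ x ∈ Set.Icc 0 x₀, S x = S₀)
    (hmid : ∀ x ∈ Set.Ioo x₀ x₁, S x = q / (1 - x))
    (hright : ∀ x ∈ Set.Icc x₁ 1, S x = S₁)
    (hbound : ∀ x ∈ Set.Icc (0:ℝ) 1, S₀ ≤ S x ∧ S x ≤ S₁)
    (hmax : ∀ T : ℝ → ℝ, Measurable T →
      (∀ x ∈ Set.Icc (0:ℝ) 1, S₀ ≤ T x ∧ T x ≤ S₁) →
      coolingFunctional T ≤ coolingFunctional S) :
    q = (1 - x₀) * S₀ ∧ q = (1 - x₁) * S₁ ∧ x₀ = 1 - q / S₀ ∧ x₁ = 1 - q / S₁ := by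
  -- `S` is not assumed measurable; the argument runs on a measurable copy of it on `[0, 1]`.
  obtain ⟨P, hPm, hSP⟩ := exists_measurable_eqOn_of_three_segments hleft hmid hright
  have hP : IsAdmissibleProfile S₀ S₁ P := ⟨hPm, fun x hx => hSP hx ▸ hbound x hx⟩
  have hopt : IsOptimalProfile S₀ S₁ P := fun T hT =>
    (hmax T hT.1 hT.2).trans_eq (coolingFunctional_congr hSP)
  have hx₀1 : x₀ < 1 := hx₀x₁.trans_le hx₁
  have hPleft : ∀ x ∈ Icc 0 x₀, P x = S₀ := fun x hx =>
    (hSP ⟨hx.1, hx.2.trans hx₀1.le⟩).symm.trans (hleft x hx)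
  have hPmid : ∀ x ∈ Ioo x₀ x₁, P x = q / (1 - x) := fun x hx =>
    (hSP ⟨hx₀.trans hx.1.le, hx.2.le.trans hx₁⟩).symm.trans (hmid x hx)
  have hPright : ∀ x ∈ Icc x₁ 1, P x = S₁ := fun x hx =>
    (hSP ⟨(hx₀.trans hx₀x₁.le).trans hx.1, hx.2⟩).symm.trans (hright x hx)
  obtain ⟨hq₀, hq₁⟩ := one_sub_mul_le_and_le_one_sub_mul hx₀x₁ hx₁
    fun x hx => hmid x hx ▸ hbound x ⟨hx₀.trans hx.1.le, hx.2.le.trans hx₁⟩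
  have hq₁' := hopt.eq_at_right_junction hP hS₀ hq hx₀ hx₀x₁ hx₁ hPmid hPright hq₁
  have hq₀' := hopt.eq_at_left_junction hP hS₀ hx₀ hx₀x₁ hx₁ hPleft hPmid hPright hq₀ hq₁'
  have hS₁ : 0 < S₁ := hS₀.trans_le hS₀S₁
  refine ⟨hq₀', hq₁', ?_, ?_⟩ <;> field_simp <;> linarith

theorem optimal_profile_continuous_at_junctions (S₀ S₁ x₀ x₁ q : ℝ)
    (hS₀ : 0 < S₀) (hS₀S₁ : S₀ ≤ S₁)
    (hx₀ : 0 ≤ x₀) (hx₀x₁ : x₀ < x₁) (hx₁ : x₁ ≤ 1) (hq : 0 < q)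
    (S : ℝ → ℝ)
    (hleft : ∀ x ∈ Set.Icc 0 x₀, S x = S₀)
    (hmid : ∀ x ∈ Set.Ioo x₀ x₁, S x = q / (1 - x))
    (hright : ∀ x ∈ Set.Icc x₁ 1, S x = S₁)
    (hmono : MonotoneOn S (Set.Icc 0 1))
    (hbound : ∀ x ∈ Set.Icc (0:ℝ) 1, S₀ ≤ S x ∧ S x ≤ S₁)
    (hmax : ∀ T : ℝ → ℝ, Measurable T →
      (∀ x ∈ Set.Icc (0:ℝ) 1, S₀ ≤ T x ∧ T x ≤ S₁) →
      coolingFunctional T ≤ coolingFunctional S) :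
    q = (1 - x₀) * S₀ ∧ q = (1 - x₁) * S₁ ∧ x₀ = 1 - q / S₀ ∧ x₁ = 1 - q / S₁ :=
  optimal_profile_continuous_at_junctions_general S₀ S₁ x₀ x₁ q hS₀ hS₀S₁ hx₀ hx₀x₁ hx₁ hq S hleft
    hmid hright hbound hmax
end

section
/- Let 0 < S₀ ≤ S₁ and let q be a real number with 0 < q ≤ S₀. Set x₀ = 1 − q/S₀ and x₁ = 1 − q/S₁, and define S_q : [0,1] → ℝ by S_q(x) = S₀ on [0,x₀], S_q(x) = q/(1−x) on (x₀,x₁), and S_q(x) = S₁ on [x₁,1]. Then ∫₀¹ (1−x)·S_q(x)² dx = S₀²/2 + q²·log(S₁/S₀). -/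
/-! On `[0, x₀]` and `[x₁, 1]` the integrand is linear, and since `S₀ (1 - x₀) = S₁ (1 - x₁) = q`
these pieces contribute `(S₀² - q²)/2` and `q²/2`. On `[x₀, x₁]` the integrand is `q²/(1 - x)`,
whose integral is `q² log ((1 - x₀)/(1 - x₁)) = q² log (S₁/S₀)`. -/

open MeasureTheory intervalIntegral Set Interval

theorem integral_eq_add_add_of_eqOn {f g₁ g₂ g₃ : ℝ → ℝ} {a b c d : ℝ}
    (h₁ : EqOn f g₁ [[a, b]]) (h₂ : EqOn f g₂ [[b, c]]) (h₃ : EqOn f g₃ [[c, d]])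
    (hg₁ : IntervalIntegrable g₁ volume a b) (hg₂ : IntervalIntegrable g₂ volume b c)
    (hg₃ : IntervalIntegrable g₃ volume c d) :
    ∫ x in a..d, f x = (∫ x in a..b, g₁ x) + (∫ x in b..c, g₂ x) + ∫ x in c..d, g₃ x := by
  have hf₁ := (intervalIntegrable_congr (h₁.mono uIoc_subset_uIcc)).2 hg₁
  have hf₂ := (intervalIntegrable_congr (h₂.mono uIoc_subset_uIcc)).2 hg₂
  have hf₃ := (intervalIntegrable_congr (h₃.mono uIoc_subset_uIcc)).2 hg₃
  rw [← integral_add_adjacent_intervals (hf₁.trans hf₂) hf₃,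
    ← integral_add_adjacent_intervals hf₁ hf₂, integral_congr h₁, integral_congr h₂,
    integral_congr h₃]

theorem eqOn_Icc_of_eqOn_Ioo {f g : ℝ → ℝ} {a b : ℝ} (h : EqOn f g (Ioo a b))
    (ha : f a = g a) (hb : f b = g b) : EqOn f g (Icc a b) := by
  rintro x ⟨hax, hxb⟩
  rcases hax.eq_or_lt with rfl | hax
  · exact ha
  rcases hxb.eq_or_lt with rfl | hxb
  · exact hb
  exact h ⟨hax, hxb⟩

theorem integral_one_sub_mul_sq (a b c : ℝ) :
    ∫ x in a..b, (1 - x) * c ^ 2 = ((c * (1 - a)) ^ 2 - (c * (1 - b)) ^ 2) / 2 := by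
  simp only [intervalIntegral.integral_mul_const, integral_comp_sub_left (fun x => x) 1,
    integral_id]
  ring

theorem integral_sq_div_one_sub {a b : ℝ} (q : ℝ) (ha : a < 1) (hb : b < 1) :
    ∫ x in a..b, q ^ 2 / (1 - x) = q ^ 2 * Real.log ((1 - a) / (1 - b)) := by
  have h0 : (0 : ℝ) ∉ [[1 - b, 1 - a]] := fun h => by
    rcases mem_uIcc.1 h with h | h <;> linarith [h.1, h.2]
  simp only [div_eq_mul_inv, intervalIntegral.integral_const_mul,
    integral_comp_sub_left (fun x => x⁻¹) 1, integral_inv h0]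

theorem weighted_integral_of_three_segment_profile (S₀ S₁ q : ℝ) (hS₀ : 0 < S₀)
    (hS₀S₁ : S₀ ≤ S₁) (hq0 : 0 < q) (hq : q ≤ S₀) (S : ℝ → ℝ)
    (hleft : ∀ x ∈ Set.Icc (0:ℝ) (1 - q / S₀), S x = S₀)
    (hmid : ∀ x ∈ Set.Ioo (1 - q / S₀) (1 - q / S₁), S x = q / (1 - x))
    (hright : ∀ x ∈ Set.Icc (1 - q / S₁) (1:ℝ), S x = S₁) :
    (∫ x in (0:ℝ)..1, (1 - x) * (S x)^2) = S₀^2 / 2 + q^2 * Real.log (S₁ / S₀) := by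
  set x₀ := 1 - q / S₀
  set x₁ := 1 - q / S₁
  have hS₁ : 0 < S₁ := hS₀.trans_le hS₀S₁
  have hx₀ : 0 ≤ x₀ := sub_nonneg.2 ((div_le_one hS₀).2 hq)
  have hx₀₁ : x₀ ≤ x₁ := sub_le_sub_left (div_le_div_of_nonneg_left hq0.le hS₀ hS₀S₁) 1
  have hx₁ : x₁ < 1 := sub_lt_self 1 (div_pos hq0 hS₁)
  have hS_mid : EqOn S (fun x => q / (1 - x)) (Icc x₀ x₁) :=
    eqOn_Icc_of_eqOn_Ioo hmid
      (by rw [hleft _ ⟨hx₀, le_rfl⟩, sub_sub_cancel, div_div_cancel₀ hq0.ne'])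
      (by rw [hright _ ⟨le_rfl, hx₁.le⟩, sub_sub_cancel, div_div_cancel₀ hq0.ne'])
  have hmid_ne : ∀ x ∈ [[x₀, x₁]], 1 - x ≠ 0 := fun x hx => by
    rw [uIcc_of_le hx₀₁] at hx
    linarith [hx.2]
  have h₁ : EqOn (fun x => (1 - x) * S x ^ 2) (fun x => (1 - x) * S₀ ^ 2) [[0, x₀]] :=
    fun x hx => by rw [uIcc_of_le hx₀] at hx; simp only [hleft x hx]
  have h₂ : EqOn (fun x => (1 - x) * S x ^ 2) (fun x => q ^ 2 / (1 - x)) [[x₀, x₁]] :=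
    fun x hx => by
      have := hmid_ne x hx
      rw [uIcc_of_le hx₀₁] at hx
      simp only [hS_mid hx]
      field_simp
  have h₃ : EqOn (fun x => (1 - x) * S x ^ 2) (fun x => (1 - x) * S₁ ^ 2) [[x₁, 1]] :=
    fun x hx => by rw [uIcc_of_le hx₁.le] at hx; simp only [hright x hx]
  rw [integral_eq_add_add_of_eqOn h₁ h₂ h₃ (Continuous.intervalIntegrable (by fun_prop) _ _)
      (continuousOn_const.div (by fun_prop) hmid_ne).intervalIntegrable
      (Continuous.intervalIntegrable (by fun_prop) _ _),
    integral_one_sub_mul_sq, integral_one_sub_mul_sq, integral_sq_div_one_sub q (by linarith) hx₁,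
    sub_sub_cancel, sub_sub_cancel, div_div_div_cancel_left' _ _ hq0.ne']
  field_simp
  ring
end

section
/- Let 0 < S₀ ≤ S₁, let 0 ≤ x₀ < x₁ ≤ 1, and let S : [0,1] → ℝ be continuous, non-decreasing, with S(x) = S₀ on [0,x₀], S(x) = S₁ on [x₁,1], and S₀ < S(x) < S₁ for x ∈ (x₀,x₁). If for every continuous ΔS : [0,1] → ℝ vanishing outside (x₀,x₁) with ∫₀¹ ΔS(x) dx = 0 one has ∫₀¹ (1−x)·S(x)·ΔS(x) dx = 0, then there is a constant q > 0 such that S(x) = q/(1−x) for all x ∈ (x₀,x₁). -/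
/-!
A continuous `g` with `∫ g φ = 0` for every mean-zero test function `φ` supported in `(l, r)` is
constant there (du Bois-Reymond). Fix a positive weight `w` on `(l, r)` and put
`c = ∫ g w / ∫ w`; subtracting the right multiple of `w` from any test function `φ` gives
`∫ g φ = c ∫ φ`. For `φ = (g - c) w` this says `∫ (g - c)² w = 0`, so `g = c` on `(l, r)`.
Applied to `g x = (1 - x) S x`, this gives `S x = q / (1 - x)`, with `q > 0` because `S > 0`.
-/

open MeasureTheory intervalIntegral Set Function

theorem intervalIntegral_eq_of_eq_zero_off_Ioo {E : Type*} [NormedAddCommGroup E]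
    [NormedSpace ℝ E] {f : ℝ → E} {a b l r : ℝ} (hal : a ≤ l) (hrb : r ≤ b)
    (hf : ∀ x ∉ Ioo l r, f x = 0) :
    ∫ x in a..b, f x = ∫ x in l..r, f x := by
  have hsupp : ∀ {a b : ℝ}, a ≤ l → r ≤ b → support f ⊆ Ioc a b := fun hal hrb x hx =>
    Ioo_subset_Ioc_self.trans (Ioc_subset_Ioc hal hrb) (not_imp_comm.1 (hf x) hx)
  rw [integral_eq_integral_of_support_subset (hsupp hal hrb),
    integral_eq_integral_of_support_subset (hsupp le_rfl le_rfl)]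

theorem intervalIntegral_pos_of_continuous_of_nonneg {f : ℝ → ℝ} {a b x : ℝ}
    (hf : Continuous f) (hf₀ : 0 ≤ f) (hx : x ∈ Ioo a b) (hfx : f x ≠ 0) :
    0 < ∫ t in a..b, f t := by
  rw [integral_pos_iff_support_of_nonneg_ae (ae_of_all _ hf₀) (hf.intervalIntegrable a b)]
  refine ⟨hx.1.trans hx.2, ?_⟩
  calc 0 < volume (support f ∩ Ioo a b) :=
        (hf.isOpen_support.inter isOpen_Ioo).measure_pos volume ⟨x, hfx, hx⟩
    _ ≤ volume (support f ∩ Ioc a b) :=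
        measure_mono (inter_subset_inter_right _ Ioo_subset_Ioc_self)

noncomputable def bumpWeight (l r x : ℝ) : ℝ := max ((x - l) * (r - x)) 0

section BumpWeight

variable {l r : ℝ}

theorem continuous_bumpWeight : Continuous (bumpWeight l r) := by
  unfold bumpWeight; fun_prop

theorem bumpWeight_nonneg (x : ℝ) : 0 ≤ bumpWeight l r x := le_max_right _ _

theorem bumpWeight_pos {x : ℝ} (hx : x ∈ Ioo l r) : 0 < bumpWeight l r x :=
  lt_max_of_lt_left (mul_pos (sub_pos.2 hx.1) (sub_pos.2 hx.2))

theorem bumpWeight_eq_zero (hlr : l ≤ r) {x : ℝ} (hx : x ∉ Ioo l r) :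
    bumpWeight l r x = 0 := by
  refine max_eq_right ?_
  rcases le_or_gt x l with hxl | hlx
  · exact mul_nonpos_of_nonpos_of_nonneg (by linarith) (by linarith)
  · have hrx : r ≤ x := le_of_not_gt (hx ⟨hlx, ·⟩)
    exact mul_nonpos_of_nonneg_of_nonpos (by linarith) (by linarith)

end BumpWeight

section DuBoisReymond

variable {g : ℝ → ℝ} {l r : ℝ}

theorem integral_mul_eq_div_mul_integral_of_integral_mul_eq_zero (hlr : l ≤ r)
    (hg : ContinuousOn g (Icc l r))
    (h : ∀ φ : ℝ → ℝ, Continuous φ → (∀ x ∉ Ioo l r, φ x = 0) →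
      ∫ x in l..r, φ x = 0 → ∫ x in l..r, g x * φ x = 0)
    {w : ℝ → ℝ} (hw : Continuous w) (hw₀ : ∀ x ∉ Ioo l r, w x = 0)
    (hwint : ∫ x in l..r, w x ≠ 0)
    {φ : ℝ → ℝ} (hφ : Continuous φ) (hφ₀ : ∀ x ∉ Ioo l r, φ x = 0) :
    ∫ x in l..r, g x * φ x =
      (∫ x in l..r, g x * w x) / (∫ x in l..r, w x) * ∫ x in l..r, φ x := by
  have hgi : ∀ {ψ : ℝ → ℝ}, Continuous ψ →
      IntervalIntegrable (fun x => g x * ψ x) volume l r :=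
    fun hψ => (hg.mul hψ.continuousOn).intervalIntegrable_of_Icc hlr
  set k := (∫ x in l..r, φ x) / ∫ x in l..r, w x
  have hψ := h (fun x => φ x - k * w x) (hφ.sub (continuous_const.mul hw))
    (fun x hx => by simp [hφ₀ x hx, hw₀ x hx]) (by
      rw [integral_sub (hφ.intervalIntegrable _ _) ((hw.intervalIntegrable _ _).const_mul k),
        intervalIntegral.integral_const_mul, div_mul_cancel₀ _ hwint, sub_self])
  have hexpand : ∫ x in l..r, g x * (φ x - k * w x) =
      (∫ x in l..r, g x * φ x) - k * ∫ x in l..r, g x * w x := by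
    rw [← intervalIntegral.integral_const_mul, ← integral_sub (hgi hφ) ((hgi hw).const_mul k)]
    exact integral_congr fun x _ => by ring
  rw [hexpand, sub_eq_zero] at hψ
  rw [hψ, div_mul_comm, mul_comm]

theorem exists_eq_const_on_Ioo_of_integral_mul_eq_zero (hlr : l < r)
    (hg : ContinuousOn g (Icc l r))
    (h : ∀ φ : ℝ → ℝ, Continuous φ → (∀ x ∉ Ioo l r, φ x = 0) →
      ∫ x in l..r, φ x = 0 → ∫ x in l..r, g x * φ x = 0) :
    ∃ c, ∀ x ∈ Ioo l r, g x = c := by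
  set c := (∫ x in l..r, g x * bumpWeight l r x) / ∫ x in l..r, bumpWeight l r x
  have hwint : ∫ x in l..r, bumpWeight l r x ≠ 0 :=
    (intervalIntegral_pos_of_pos_on (continuous_bumpWeight.intervalIntegrable _ _)
      (fun _ => bumpWeight_pos) hlr).ne'
  -- `G` is a continuous extension of `g` off `[l, r]`, so that `(G - c) w` is a test function.
  set G := IccExtend hlr.le ((Icc l r).domRestrict g)
  have hG : Continuous G := (continuousOn_iff_continuous_domRestrict.1 hg).Icc_extend'
  have hGg : ∀ x ∈ Icc l r, G x = g x := fun x hx => IccExtend_of_mem _ _ hx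
  have hφ : Continuous fun x => (G x - c) * bumpWeight l r x :=
    (hG.sub continuous_const).mul continuous_bumpWeight
  have hsq : ∫ x in l..r, (G x - c) ^ 2 * bumpWeight l r x = 0 := by
    have hgφ := integral_mul_eq_div_mul_integral_of_integral_mul_eq_zero hlr.le hg h
      continuous_bumpWeight (fun _ => bumpWeight_eq_zero hlr.le) hwint hφ
      (fun x hx => by simp [bumpWeight_eq_zero hlr.le hx])
    rw [← intervalIntegral.integral_const_mul, ← sub_eq_zero,
      ← intervalIntegral.integral_sub] at hgφ
    · rw [← hgφ]
      refine integral_congr fun x hx => ?_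
      rw [uIcc_of_le hlr.le] at hx
      simp only [hGg x hx]
      ring
    · exact (hg.mul hφ.continuousOn).intervalIntegrable_of_Icc hlr.le
    · exact (continuous_const.mul hφ).intervalIntegrable _ _
  refine ⟨c, fun x hx => ?_⟩
  by_contra hne
  refine hsq.not_gt (intervalIntegral_pos_of_continuous_of_nonneg
    (((hG.sub continuous_const).pow 2).mul continuous_bumpWeight)
    (fun y => mul_nonneg (sq_nonneg _) (bumpWeight_nonneg y)) hx ?_)
  rw [hGg x (Ioo_subset_Icc_self hx)]
  exact mul_ne_zero (pow_ne_zero 2 (sub_ne_zero.2 hne)) (bumpWeight_pos hx).ne'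

end DuBoisReymond

theorem middle_segment_shape_general (S₀ S₁ x₀ x₁ : ℝ) (hS₀ : 0 < S₀)
    (hx₀ : 0 ≤ x₀) (hx₀x₁ : x₀ < x₁) (hx₁ : x₁ ≤ 1)
    (S : ℝ → ℝ) (hcont : ContinuousOn S (Set.Icc 0 1))
    (hmid : ∀ x ∈ Set.Ioo x₀ x₁, S₀ < S x ∧ S x < S₁)
    (hvar : ∀ ΔS : ℝ → ℝ, Continuous ΔS → (∀ x, x ∉ Set.Ioo x₀ x₁ → ΔS x = 0) →
      (∫ x in (0:ℝ)..1, ΔS x) = 0 → (∫ x in (0:ℝ)..1, (1 - x) * S x * ΔS x) = 0) :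
    ∃ q : ℝ, 0 < q ∧ ∀ x ∈ Set.Ioo x₀ x₁, S x = q / (1 - x) := by
  have hrestrict : ∀ {f : ℝ → ℝ}, (∀ x ∉ Ioo x₀ x₁, f x = 0) →
      ∫ x in (0:ℝ)..1, f x = ∫ x in x₀..x₁, f x :=
    intervalIntegral_eq_of_eq_zero_off_Ioo hx₀ hx₁
  have hg : ContinuousOn (fun x => (1 - x) * S x) (Icc x₀ x₁) :=
    (continuousOn_const.sub continuousOn_id).mul (hcont.mono (Icc_subset_Icc hx₀ hx₁))
  obtain ⟨q, hq⟩ := exists_eq_const_on_Ioo_of_integral_mul_eq_zero hx₀x₁ hg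
    fun φ hφ hφ₀ hφint => by
      rw [← hrestrict fun x hx => by simp [hφ₀ x hx]]
      exact hvar φ hφ hφ₀ (by rw [hrestrict hφ₀, hφint])
  have hpos : ∀ x ∈ Ioo x₀ x₁, 0 < 1 - x := fun x hx => by linarith [hx.2]
  refine ⟨q, ?_, fun x hx => by rw [eq_div_iff (hpos x hx).ne', mul_comm, hq x hx]⟩
  have hmem : (x₀ + x₁) / 2 ∈ Ioo x₀ x₁ := ⟨by linarith, by linarith⟩
  rw [← hq _ hmem]
  exact mul_pos (hpos _ hmem) (hS₀.trans (hmid _ hmem).1)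

theorem middle_segment_shape (S₀ S₁ x₀ x₁ : ℝ) (hS₀ : 0 < S₀) (hS₀S₁ : S₀ ≤ S₁)
    (hx₀ : 0 ≤ x₀) (hx₀x₁ : x₀ < x₁) (hx₁ : x₁ ≤ 1)
    (S : ℝ → ℝ) (hcont : ContinuousOn S (Set.Icc 0 1)) (hmono : MonotoneOn S (Set.Icc 0 1))
    (hleft : ∀ x ∈ Set.Icc 0 x₀, S x = S₀)
    (hright : ∀ x ∈ Set.Icc x₁ 1, S x = S₁)
    (hmid : ∀ x ∈ Set.Ioo x₀ x₁, S₀ < S x ∧ S x < S₁)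
    (hvar : ∀ ΔS : ℝ → ℝ, Continuous ΔS → (∀ x, x ∉ Set.Ioo x₀ x₁ → ΔS x = 0) →
      (∫ x in (0:ℝ)..1, ΔS x) = 0 → (∫ x in (0:ℝ)..1, (1 - x) * S x * ΔS x) = 0) :
    ∃ q : ℝ, 0 < q ∧ ∀ x ∈ Set.Ioo x₀ x₁, S x = q / (1 - x) :=
  middle_segment_shape_general S₀ S₁ x₀ x₁ hS₀ hx₀ hx₀x₁ hx₁ S hcont hmid hvar
end
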